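/- arXiv:2210.14741 — 13 statements merged into one kernel-verified Lean document; each statement's English description precedes it below -/
import Mathlib

section
/- Let p be a prime with p ≡ 1 (mod 4). Then the Legendre symbol (D_p(2,2)/p) equals 1 if p ≡ 1 (mod 8), and equals 0 if p ≡ 5 (mod 8). -/
/-!
Modulo `p` the entries are `Q(x, y)⁻¹` with `Q(x, y) = x² + 2xy + 2y²` and `x, y` running over
`𝔽ₚˣ`, so that `Q(x, y)⁻¹ = y⁻² f(x / y)` with `f t = (t² + 2t + 2)⁻¹`. A matrix `f(x / y)`
indexed by the cyclic group `𝔽ₚˣ` is diagonalised by the characters `u ↦ uᵏ`, so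
`Dₚ(2,2) ≡ ∏ₖ cₖ` with `cₖ = ∑_u uᵏ f(u)`. Factoring `t² + 2t + 2 = (t - r)(t - sr)` with
`s² = -1`, `r = s - 1`, partial fractions give `-4 c_{n+1} = rⁿ Bₙ` with `Bₙ = momentFactor s n`
depending only on `n mod 4`, and the substitution `u ↦ 2 / u` gives `2 cₐ = 2ᵃ c_b` whenever
`a + b ≡ 2 (mod p - 1)`.

If `p ≡ 5 (mod 8)`, then `2` is a non-residue and the self-paired moment `c_{(p+1)/2}` equals its
own negative. If `p ≡ 1 (mod 8)`, then `2` is a residue and no `cₖ` vanishes, so paired moments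
have the same quadratic character and the two self-paired ones, `c₁` and `c_{(p+1)/2}`, are
squares.
-/

/-- `Dp p b c` is the determinant of the `(p-1) × (p-1)` matrix whose `(i,j)`-entry
(for `1 ≤ i, j ≤ p-1`) is `(i² + b·i·j + c·j²)^(p-2)`. -/
noncomputable def Dp (p : ℕ) (b c : ℤ) : ℤ :=
  Matrix.det (Matrix.of fun i j : Fin (p - 1) =>
    (((i : ℕ) + 1 : ℤ) ^ 2 + b * ((i : ℕ) + 1) * ((j : ℕ) + 1)
      + c * ((j : ℕ) + 1) ^ 2) ^ (p - 2))

open Finset Matrix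

theorem Nat.sub_one_dvd_add_sub_two_iff {q j : ℕ} (hq : 3 ≤ q) (hj : j ≤ q - 2) :
    q - 1 ∣ j + (q - 2) ↔ j = 1 := by
  refine ⟨fun h => ?_, fun h => by rw [h, show 1 + (q - 2) = q - 1 by omega]⟩
  rcases Nat.eq_zero_or_pos j with rfl | hj0
  · have := Nat.eq_zero_of_dvd_of_lt (by simpa using h) (by omega : 0 + (q - 2) < q - 1)
    omega
  · rw [show j + (q - 2) = j - 1 + (q - 1) by omega, Nat.dvd_add_left dvd_rfl] at h
    have := Nat.eq_zero_of_dvd_of_lt h (by omega)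
    omega

theorem Nat.mod_four_eq_one_of_add_self_modEq_two {n k : ℕ} (hn : 8 ∣ n) (hk : k < n)
    (h : k + k ≡ 2 [MOD n]) : k % 4 = 1 := by
  rcases lt_or_ge (k + k) n with hlt | hge
  · rw [Nat.ModEq, Nat.mod_eq_of_lt hlt, Nat.mod_eq_of_lt (by omega)] at h
    omega
  · rw [Nat.ModEq, Nat.mod_eq_sub_mod hge, Nat.mod_eq_of_lt (by omega),
      Nat.mod_eq_of_lt (by omega)] at h
    omega

section MomentFactor

variable {R : Type*} [CommRing R] {s : R}

def momentFactor (s : R) (n : ℕ) : R :=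
  (s - 1) * (1 + s ^ (n + 1)) - 2 * (n + 1) * (s - s ^ (n + 1))

theorem pow_four_mul_add_of_sq_eq_neg_one (hs : s ^ 2 = -1) (m j : ℕ) :
    s ^ (4 * m + j) = s ^ j := by
  rw [pow_add, pow_mul, show s ^ 4 = 1 by linear_combination (s ^ 2 - 1) * hs, one_pow, one_mul]

theorem momentFactor_four_mul (hs : s ^ 2 = -1) (m : ℕ) : momentFactor s (4 * m) = -2 := by
  rw [momentFactor, pow_four_mul_add_of_sq_eq_neg_one hs]
  linear_combination hs

theorem momentFactor_four_mul_add_one (hs : s ^ 2 = -1) (m : ℕ) :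
    momentFactor s (4 * m + 1) = -2 * ((4 * m + 2 : ℕ) : R) * (s + 1) := by
  rw [momentFactor, add_assoc, pow_four_mul_add_of_sq_eq_neg_one hs]
  push_cast
  linear_combination (3 + 8 * (m : R) + s) * hs

theorem momentFactor_four_mul_add_two (hs : s ^ 2 = -1) (m : ℕ) :
    momentFactor s (4 * m + 2) = -2 * s * ((8 * m + 5 : ℕ) : R) := by
  rw [momentFactor, add_assoc, pow_four_mul_add_of_sq_eq_neg_one hs]
  push_cast
  linear_combination (s ^ 2 - 1 + 5 * s + 8 * (m : R) * s) * hs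

theorem momentFactor_four_mul_add_three (hs : s ^ 2 = -1) (m : ℕ) :
    momentFactor s (4 * m + 3) = -2 * ((4 * m + 3 : ℕ) : R) * (s - 1) := by
  rw [momentFactor, add_assoc, pow_four_mul_add_of_sq_eq_neg_one hs]
  push_cast
  linear_combination (s ^ 2 - 1) * (7 + 8 * (m : R) + s) * hs

end MomentFactor

section FiniteField

variable {F : Type*} [Field F] [Fintype F]

theorem FiniteField.pow_card_sub_two_eq_inv (hF : Fintype.card F ≠ 2) (x : F) :
    x ^ (Fintype.card F - 2) = x⁻¹ := by
  have : 2 < Fintype.card F := lt_of_le_of_ne Fintype.one_lt_card hF.symm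
  rcases eq_or_ne x 0 with rfl | hx
  · rw [zero_pow (by omega), _root_.inv_zero]
  · refine eq_inv_of_mul_eq_one_left ?_
    rw [← pow_succ, show Fintype.card F - 2 + 1 = Fintype.card F - 1 by omega,
      FiniteField.pow_card_sub_one_eq_one x hx]

variable [DecidableEq F]

theorem sum_units_eq_sum {M : Type*} [AddCommMonoid M] (g : F → M) (h0 : g 0 = 0) :
    ∑ u : Fˣ, g u = ∑ t, g t := by
  rw [← sum_filter_of_ne (p := fun t : F => t ≠ 0) (fun t _ ht h => ht (h ▸ h0)),
    sum_subtype _ (fun _ => mem_filter_univ _)]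
  exact Fintype.sum_equiv unitsEquivNeZero _ _ fun _ => rfl

theorem FiniteField.sum_pow_of_ne_zero {m : ℕ} (hm : m ≠ 0) :
    ∑ t : F, t ^ m = if Fintype.card F - 1 ∣ m then -1 else 0 := by
  rw [← sum_units_eq_sum _ (zero_pow hm), FiniteField.sum_pow_units]

theorem sum_pow_succ_mul_inv_sub {n : ℕ} (hn : n + 3 ≤ Fintype.card F) (r : F) :
    ∑ t : F, t ^ (n + 1) * (t - r)⁻¹ = -(n + 1 : F) * r ^ n := by
  calc ∑ t : F, t ^ (n + 1) * (t - r)⁻¹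
      = ∑ t : F, (t + r) ^ (n + 1) * t ^ (Fintype.card F - 2) := by
        rw [← Equiv.sum_comp (Equiv.addRight r)]
        simp only [Equiv.coe_addRight, add_sub_cancel_right,
          FiniteField.pow_card_sub_two_eq_inv (F := F) (by omega : Fintype.card F ≠ 2)]
    _ = ∑ j ∈ range (n + 2),
          r ^ (n + 1 - j) * (n + 1).choose j * ∑ t : F, t ^ (j + (Fintype.card F - 2)) := by
        simp_rw [add_pow, sum_mul, mul_sum]
        rw [sum_comm]
        refine sum_congr rfl fun j _ => sum_congr rfl fun t _ => ?_
        ring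
    _ = ∑ j ∈ range (n + 2), if j = 1 then -(n + 1 : F) * r ^ n else 0 := by
        refine sum_congr rfl fun j hj => ?_
        have hj : j ≤ Fintype.card F - 2 := by have := mem_range.1 hj; omega
        rw [FiniteField.sum_pow_of_ne_zero (by omega),
          if_congr (Nat.sub_one_dvd_add_sub_two_iff (by omega) hj) rfl rfl]
        split_ifs with h
        · subst h
          simp only [add_tsub_cancel_right, Nat.choose_one_right]
          push_cast
          ring
        · exact mul_zero _
    _ = -(n + 1 : F) * r ^ n := by simp

def unitsMoment (f : F → F) (k : ℕ) : F := ∑ u : Fˣ, (u : F) ^ k * f u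

theorem mul_vandermonde_inv_eq {n : ℕ} (e : Fin n ≃ Fˣ) (f : F → F) :
    of (fun i j => f (e i / e j)) * vandermonde (fun i => (e i : F)⁻¹) =
      vandermonde (fun i => (e i : F)⁻¹) * diagonal (fun k : Fin n => unitsMoment f k) := by
  ext i k
  rw [mul_diagonal, mul_apply, unitsMoment, mul_sum,
    ← (Equiv.divLeft (e i)).sum_comp, ← e.sum_comp]
  refine Fintype.sum_congr _ _ fun j => ?_
  simp only [of_apply, vandermonde_apply, Equiv.divLeft_apply, Units.val_div_eq_div_val]
  rw [mul_comm, ← mul_assoc, ← mul_pow, div_eq_mul_inv, inv_mul_cancel_left₀ (e i).ne_zero]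

theorem det_of_div_eq_prod_unitsMoment {n : ℕ} (e : Fin n ≃ Fˣ) (f : F → F) :
    (of fun i j => f (e i / e j)).det = ∏ k : Fin n, unitsMoment f k := by
  have hV : (vandermonde fun i => (e i : F)⁻¹).det ≠ 0 :=
    det_vandermonde_ne_zero_iff.2 fun i j h => e.injective (Units.val_injective (inv_inj.1 h))
  have := congrArg det (mul_vandermonde_inv_eq e f)
  rw [det_mul, det_mul, det_diagonal, mul_comm] at this
  exact mul_left_cancel₀ hV this

theorem prod_sq_equiv_units_eq_one {n : ℕ} (e : Fin n ≃ Fˣ) : ∏ j, (e j : F) ^ 2 = 1 := by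
  rw [prod_pow, e.prod_comp (fun u : Fˣ => (u : F)), ← Units.coe_prod,
    FiniteField.prod_univ_units_id_eq_neg_one]
  simp

theorem det_inv_quadratic_eq_prod_unitsMoment {n : ℕ} (e : Fin n ≃ Fˣ) (β γ : F) :
    (of fun i j => ((e i : F) ^ 2 + β * e i * e j + γ * (e j : F) ^ 2)⁻¹).det =
      ∏ k : Fin n, unitsMoment (fun t => (t ^ 2 + β * t + γ)⁻¹) k := by
  have hentry : ∀ i j, ((e i : F) ^ 2 + β * e i * e j + γ * (e j : F) ^ 2)⁻¹ =
      ((e j : F) ^ 2)⁻¹ * ((e i / e j : F) ^ 2 + β * (e i / e j : F) + γ)⁻¹ := by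
    intro i j
    have := (e j).ne_zero
    rw [← mul_inv]
    congr 1
    field_simp
  simp_rw [hentry]
  refine (det_mul_row (fun j => ((e j : F) ^ 2)⁻¹)
    (of fun i j => ((e i / e j : F) ^ 2 + β * (e i / e j : F) + γ)⁻¹)).trans ?_
  rw [prod_inv_distrib, prod_sq_equiv_units_eq_one, inv_one, one_mul,
    det_of_div_eq_prod_unitsMoment e (fun t => (t ^ 2 + β * t + γ)⁻¹)]

theorem Units.val_pow_eq_of_modEq (u : Fˣ) {m n : ℕ} (h : m ≡ n [MOD Fintype.card F - 1]) :
    (u : F) ^ m = (u : F) ^ n := by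
  rw [← Units.val_pow_eq_pow_val, ← Units.val_pow_eq_pow_val, pow_eq_pow_iff_modEq.2]
  exact h.of_dvd (orderOf_dvd_card.trans (dvd_of_eq (Fintype.card_units F)))

theorem unitsMoment_inv_quadratic_pairing {β γ : F} (hγ : γ ≠ 0) {a b : ℕ}
    (hab : a + b ≡ 2 [MOD Fintype.card F - 1]) :
    γ * unitsMoment (fun t => (t ^ 2 + β * t + γ)⁻¹) a =
      γ ^ a * unitsMoment (fun t => (t ^ 2 + β * t + γ)⁻¹) b := by
  rw [unitsMoment, unitsMoment, ← (Equiv.divLeft (Units.mk0 γ hγ)).sum_comp, mul_sum, mul_sum]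
  refine Fintype.sum_congr _ _ fun u => ?_
  have hu := u.ne_zero
  have hpow : (u : F) ^ a * (u : F) ^ b = (u : F) ^ 2 := by
    rw [← pow_add, u.val_pow_eq_of_modEq hab]
  simp only [Equiv.divLeft_apply, Units.val_div_eq_div_val, Units.val_mk0]
  have hQ : (γ / u) ^ 2 + β * (γ / u) + γ = γ / (u : F) ^ 2 * ((u : F) ^ 2 + β * u + γ) := by
    field_simp
    ring
  rw [hQ, mul_inv, inv_div, div_pow, ← hpow]
  field_simp

theorem unitsMoment_inv_mul_sub_mul_sub {r₁ r₂ : F} (h : r₁ ≠ r₂) {n : ℕ}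
    (hn : n + 3 ≤ Fintype.card F) :
    unitsMoment (fun t => ((t - r₁) * (t - r₂))⁻¹) (n + 1) =
      (-(n + 1) * (r₁ ^ n - r₂ ^ n) + (r₁ ^ (n + 1) + r₂ ^ (n + 1)) / (r₁ - r₂)) / (r₁ - r₂) := by
  have hd : r₁ - r₂ ≠ 0 := sub_ne_zero.2 h
  -- partial fractions, corrected at the two poles where `0⁻¹ = 0` breaks them
  have hsplit : ∀ t : F, t ^ (n + 1) * ((t - r₁) * (t - r₂))⁻¹ =
      (t ^ (n + 1) * (t - r₁)⁻¹ - t ^ (n + 1) * (t - r₂)⁻¹) / (r₁ - r₂) +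
        (if t = r₁ then r₁ ^ (n + 1) / (r₁ - r₂) ^ 2 else 0) +
        (if t = r₂ then r₂ ^ (n + 1) / (r₁ - r₂) ^ 2 else 0) := by
    intro t
    by_cases h₁ : t = r₁
    · subst h₁
      simp only [sub_self, zero_mul, _root_.inv_zero, mul_zero, if_true, h, if_false, add_zero]
      field_simp
      ring
    by_cases h₂ : t = r₂
    · subst h₂
      simp only [sub_self, mul_zero, _root_.inv_zero, h₁, if_true, if_false, add_zero]
      field_simp
      ring
    have : t - r₁ ≠ 0 := sub_ne_zero.2 h₁
    have : t - r₂ ≠ 0 := sub_ne_zero.2 h₂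
    simp only [h₁, h₂, if_false, add_zero]
    field_simp
    ring
  rw [unitsMoment, sum_units_eq_sum (fun t => t ^ (n + 1) * ((t - r₁) * (t - r₂))⁻¹) (by simp),
    Fintype.sum_congr _ _ hsplit, sum_add_distrib, sum_add_distrib, ← sum_div, sum_sub_distrib,
    sum_ite_eq', sum_ite_eq', sum_pow_succ_mul_inv_sub hn, sum_pow_succ_mul_inv_sub hn]
  simp only [mem_univ, if_true]
  field_simp
  ring

theorem neg_four_mul_unitsMoment_eq_momentFactor {s : F} (hs : s ^ 2 = -1) (h2 : (2 : F) ≠ 0)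
    {n : ℕ} (hn : n + 3 ≤ Fintype.card F) :
    -4 * unitsMoment (fun t => (t ^ 2 + 2 * t + 2)⁻¹) (n + 1) = (s - 1) ^ n * momentFactor s n := by
  have hs0 : s ≠ 0 := by rintro rfl; norm_num at hs
  have hne : s - 1 ≠ s * (s - 1) := fun h => mul_ne_zero h2 hs0 (by linear_combination h + hs)
  have hfactor : (fun t : F => (t ^ 2 + 2 * t + 2)⁻¹) =
      fun t => ((t - (s - 1)) * (t - s * (s - 1)))⁻¹ := by
    funext t
    congr 1
    linear_combination (t - s + 2) * hs
  rw [hfactor, unitsMoment_inv_mul_sub_mul_sub hne hn, mul_pow, mul_pow,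
    show (-4 : F) = (2 * s) ^ 2 by rw [mul_pow, hs]; norm_num,
    show s - 1 - s * (s - 1) = 2 * s by linear_combination -hs, momentFactor]
  field_simp
  ring

end FiniteField

section ZMod

variable {p : ℕ}

theorem ZMod.natCast_ne_zero_of_pos_of_lt {m : ℕ} (h0 : 0 < m) (h : m < p) :
    (m : ZMod p) ≠ 0 := by
  rw [Ne, ZMod.natCast_eq_zero_iff]
  exact Nat.not_dvd_of_pos_of_lt h0 h

theorem ZMod.natCast_succ_injective :
    Function.Injective fun i : Fin (p - 1) => ((i + 1 : ℕ) : ZMod p) := by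
  intro i j h
  have := congrArg ZMod.val h
  simp only at this
  rw [ZMod.val_cast_of_lt (by omega), ZMod.val_cast_of_lt (by omega)] at this
  omega

variable [Fact p.Prime]

variable (p) in
noncomputable def finUnitsEquiv : Fin (p - 1) ≃ (ZMod p)ˣ :=
  Equiv.ofBijective (fun i => Units.mk0 ((i + 1 : ℕ) : ZMod p)
      (ZMod.natCast_ne_zero_of_pos_of_lt i.val.succ_pos (by omega))) <|
    (Fintype.bijective_iff_injective_and_card _).2
      ⟨fun _ _ h => ZMod.natCast_succ_injective (congrArg Units.val h),
        by rw [Fintype.card_fin, ZMod.card_units]⟩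

theorem finUnitsEquiv_apply (i : Fin (p - 1)) : (finUnitsEquiv p i : ZMod p) = (i : ℕ) + 1 := by
  simp [finUnitsEquiv]

theorem intCast_Dp_eq_prod_unitsMoment (hp : p ≠ 2) (b c : ℤ) :
    (Dp p b c : ZMod p) =
      ∏ k : Fin (p - 1), unitsMoment (fun t : ZMod p => (t ^ 2 + b * t + c)⁻¹) k := by
  rw [Dp, Int.cast_det, ← det_inv_quadratic_eq_prod_unitsMoment (finUnitsEquiv p)]
  congr 1
  ext i j
  simp only [map_apply, of_apply, Int.cast_pow, Int.cast_add,
    Int.cast_mul, Int.cast_natCast, Int.cast_one, finUnitsEquiv_apply]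
  simpa [ZMod.card] using FiniteField.pow_card_sub_two_eq_inv (F := ZMod p) (by rwa [ZMod.card]) _

theorem ZMod.two_ne_zero_of_ne_two (hp : p ≠ 2) : (2 : ZMod p) ≠ 0 :=
  Ring.two_ne_zero (by rwa [ZMod.ringChar_zmod_n])

theorem ZMod.two_pow_div_two (hp : p ≠ 2) : (2 : ZMod p) ^ (p / 2) = ZMod.χ₈ p := by
  have := legendreSym.eq_pow p 2
  rw [legendreSym.at_two hp] at this
  exact_mod_cast this.symm

theorem ZMod.exists_sq_eq_neg_one_of_mod_four_eq_one (h4 : p % 4 = 1) :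
    ∃ s : ZMod p, s ^ 2 = -1 := by
  obtain ⟨s, hs⟩ := ZMod.exists_sq_eq_neg_one_iff.2 (by omega : p % 4 ≠ 3)
  exact ⟨s, by rw [hs, sq]⟩

local notation "μ" => unitsMoment (fun t : ZMod p => (t ^ 2 + 2 * t + 2)⁻¹)

theorem intCast_Dp_two_two (hp : p ≠ 2) : (Dp p 2 2 : ZMod p) = ∏ k : Fin (p - 1), μ k := by
  simpa using intCast_Dp_eq_prod_unitsMoment hp 2 2

theorem two_mul_unitsMoment_eq {a b : ℕ} (hp : p ≠ 2) (hab : a + b ≡ 2 [MOD p - 1]) :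
    2 * μ a = 2 ^ a * μ b :=
  unitsMoment_inv_quadratic_pairing (ZMod.two_ne_zero_of_ne_two hp) (by rwa [ZMod.card])

theorem unitsMoment_eq_zero_of_mod_eight_eq_five (h8 : p % 8 = 5) : μ ((p + 1) / 2) = 0 := by
  have hp : p ≠ 2 := by omega
  have hpair := two_mul_unitsMoment_eq (a := (p + 1) / 2) (b := (p + 1) / 2) hp
    (Nat.ModEq.symm ((Nat.modEq_iff_dvd' (by omega)).2 ⟨1, by omega⟩))
  rw [show (p + 1) / 2 = p / 2 + 1 by omega] at hpair ⊢
  rw [pow_succ, ZMod.two_pow_div_two hp, ZMod.χ₈_nat_eq_if_mod_eight, if_neg (by omega),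
    if_neg (by omega)] at hpair
  have h4 : (4 : ZMod p) ≠ 0 := by
    simpa [show (4 : ZMod p) = 2 * 2 by norm_num] using ZMod.two_ne_zero_of_ne_two hp
  refine (mul_eq_zero.1 ?_).resolve_left h4
  linear_combination hpair

theorem momentFactor_ne_zero (h8 : p % 8 = 1) {s : ZMod p} (hs : s ^ 2 = -1) {n : ℕ}
    (hn : n + 3 ≤ p) : momentFactor s n ≠ 0 := by
  have h2 := neg_ne_zero.2 (ZMod.two_ne_zero_of_ne_two (p := p) (by omega))
  obtain ⟨m, j, hj, rfl⟩ : ∃ m j, j < 4 ∧ n = 4 * m + j :=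
    ⟨n / 4, n % 4, Nat.mod_lt _ (by norm_num), (Nat.div_add_mod n 4).symm⟩
  interval_cases j
  · rw [add_zero, momentFactor_four_mul hs]
    exact h2
  · rw [momentFactor_four_mul_add_one hs]
    refine mul_ne_zero (mul_ne_zero h2 (ZMod.natCast_ne_zero_of_pos_of_lt (by omega) (by omega)))
      fun h => h2 (by linear_combination -hs + (s - 1) * h)
  · rw [momentFactor_four_mul_add_two hs]
    refine mul_ne_zero (mul_ne_zero h2 fun h => h2 (by linear_combination 2 * s * h - 2 * hs)) ?_
    rw [Ne, ZMod.natCast_eq_zero_iff]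
    intro hd
    have := Nat.eq_of_dvd_of_lt_two_mul (by omega) hd (by omega)
    omega
  · rw [momentFactor_four_mul_add_three hs]
    exact mul_ne_zero (mul_ne_zero h2 (ZMod.natCast_ne_zero_of_pos_of_lt (by omega) (by omega)))
      fun h => h2 (by linear_combination -hs + (s + 1) * h)

theorem unitsMoment_ne_zero (h8 : p % 8 = 1) {k : ℕ} (hk : k < p - 1) : μ k ≠ 0 := by
  have h2 := ZMod.two_ne_zero_of_ne_two (p := p) (by omega)
  obtain ⟨s, hs⟩ := ZMod.exists_sq_eq_neg_one_of_mod_four_eq_one (p := p) (by omega)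
  have hsucc : ∀ n, n + 3 ≤ p → μ (n + 1) ≠ 0 := by
    intro n hn h0
    have key := neg_four_mul_unitsMoment_eq_momentFactor hs h2 (n := n) (by rwa [ZMod.card])
    rw [h0, mul_zero, eq_comm] at key
    refine mul_ne_zero (pow_ne_zero _ fun h => h2 ?_) (momentFactor_ne_zero h8 hs hn) key
    linear_combination hs - (s + 1) * h
  rcases k with _ | n
  · intro h0
    have h02 := two_mul_unitsMoment_eq (a := 0) (b := 2) (p := p) (by omega) rfl
    rw [h0, mul_zero, pow_zero, one_mul] at h02
    exact hsucc 1 (by omega) h02.symm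
  · exact hsucc n (by omega)

theorem quadraticChar_two_of_mod_eight_eq_one (h8 : p % 8 = 1) :
    quadraticChar (ZMod p) 2 = 1 := by
  have := legendreSym.at_two (p := p) (by omega)
  rw [ZMod.χ₈_nat_eq_if_mod_eight, if_neg (by omega), if_pos (by omega)] at this
  simpa [legendreSym] using this

theorem quadraticChar_unitsMoment_eq (h8 : p % 8 = 1) {a b : ℕ} (hab : a + b ≡ 2 [MOD p - 1]) :
    quadraticChar (ZMod p) (μ a) = quadraticChar (ZMod p) (μ b) := by
  have := congrArg (quadraticChar (ZMod p)) (two_mul_unitsMoment_eq (by omega) hab)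
  rwa [map_mul, map_mul, map_pow, quadraticChar_two_of_mod_eight_eq_one h8, one_pow, one_mul,
    one_mul] at this

theorem quadraticChar_unitsMoment_four_mul_add_one (h8 : p % 8 = 1) {m : ℕ}
    (hm : 4 * m + 3 ≤ p) : quadraticChar (ZMod p) (μ (4 * m + 1)) = 1 := by
  have h2 := ZMod.two_ne_zero_of_ne_two (p := p) (by omega)
  obtain ⟨s, hs⟩ := ZMod.exists_sq_eq_neg_one_of_mod_four_eq_one (p := p) (by omega)
  have hs0 : s ≠ 0 := fun h => h2 (by linear_combination 2 * hs - 2 * s * h)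
  have hs1 : s - 1 ≠ 0 := fun h => h2 (by linear_combination hs - (s + 1) * h)
  have key := neg_four_mul_unitsMoment_eq_momentFactor hs h2 (n := 4 * m) (by rwa [ZMod.card])
  rw [momentFactor_four_mul hs] at key
  have hsq : (2 * s) ^ 2 * μ (4 * m + 1) = ((s - 1) ^ (2 * m) * s) ^ 2 * 2 := by
    linear_combination key + (4 * μ (4 * m + 1) - 2 * (s - 1) ^ (4 * m)) * hs
  have := congrArg (quadraticChar (ZMod p)) hsq
  rwa [map_mul, map_mul, quadraticChar_sq_one' (mul_ne_zero h2 hs0),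
    quadraticChar_sq_one' (mul_ne_zero (pow_ne_zero _ hs1) hs0),
    quadraticChar_two_of_mod_eight_eq_one h8, one_mul] at this

theorem prod_quadraticChar_unitsMoment (h8 : p % 8 = 1) :
    ∏ k : Fin (p - 1), quadraticChar (ZMod p) (μ k) = 1 := by
  have : NeZero (p - 1) := ⟨by have := (Fact.out : p.Prime).two_le; omega⟩
  have hpair : ∀ k : Fin (p - 1), (k : ℕ) + ((2 - k : Fin (p - 1)) : ℕ) ≡ 2 [MOD p - 1] := by
    intro k
    have := congrArg Fin.val (add_sub_cancel k (2 : Fin (p - 1)))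
    rw [Fin.val_add] at this
    exact this
  refine prod_involution (fun k _ => 2 - k) (fun k _ => ?_) (fun k _ hk hfix => hk ?_)
    (fun _ _ => mem_univ _) (fun k _ => sub_sub_cancel 2 k)
  · rw [quadraticChar_unitsMoment_eq h8 (hpair k), ← sq,
      quadraticChar_sq_one (unitsMoment_ne_zero h8 (2 - k).isLt)]
  · have hk := hpair k
    rw [hfix] at hk
    rw [← Nat.div_add_mod k 4, Nat.mod_four_eq_one_of_add_self_modEq_two (by omega) k.isLt hk]
    exact quadraticChar_unitsMoment_four_mul_add_one h8 (by omega)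

end ZMod

theorem stmt1_general (p : ℕ) [Fact p.Prime] :
    (p % 8 = 1 → legendreSym p (Dp p 2 2) = 1) ∧
    (p % 8 = 5 → legendreSym p (Dp p 2 2) = 0) := by
  refine ⟨fun h8 => ?_, fun h8 => ?_⟩
  · rw [legendreSym, intCast_Dp_two_two (by omega), map_prod, prod_quadraticChar_unitsMoment h8]
  · rw [legendreSym.eq_zero_iff, intCast_Dp_two_two (by omega)]
    exact prod_eq_zero (mem_univ ⟨(p + 1) / 2, by omega⟩)
      (unitsMoment_eq_zero_of_mod_eight_eq_five h8)

theorem stmt1 (p : ℕ) [Fact p.Prime] (hp4 : p % 4 = 1) :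
    (p % 8 = 1 → legendreSym p (Dp p 2 2) = 1) ∧
    (p % 8 = 5 → legendreSym p (Dp p 2 2) = 0) :=
  stmt1_general p
end

section
/- Let p be a prime with p ≡ 2 (mod 3). Then the Legendre symbol (D_p(1,1)/p) equals the Legendre symbol (-2/p). -/
/-!
Reduce modulo `p` and write `x i = i + 1` for the nonzero residues. There the entries become
`(xᵢ² + xᵢxⱼ + xⱼ²)⁻¹`, and substituting `xⱼ = xᵢ w` shows that the matrix sends the column
`(xⱼ^(k+2))ⱼ` to `(xᵢ^k S(k+2))ᵢ`, where `S n = phi3Sum K n = ∑_w w^n / (w² + w + 1)`.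
Comparing determinants with the Vandermonde matrix of the `xᵢ` gives `D · (∏ xᵢ)² = S 2 ⋯ S p`.
Since `p ≡ 2 (mod 3)` the polynomial `w² + w + 1` has no root, so
`S (n+2) + S (n+1) + S n = ∑_w w^n`, which vanishes for `n < p - 1`. Hence `S` is `3`-periodic
up to `p`, with `S 0 = -2 S 1`, `S 2 = S (p - 1) = S 1` (via `w ↦ w⁻¹`) and `3 S 1 = -1` (the
recurrence at `n = p - 1`). The product is `(-2)^((p-2)/3)`, an odd power of `-2`.
-/

open Finset

variable {K : Type*} [Field K] [Fintype K]

local notation "q" => Fintype.card K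

namespace FiniteField

theorem pow_card_sub_two_eq_inv_s2 {a : K} (ha : a ≠ 0) : a ^ (q - 2) = a⁻¹ := by
  refine eq_inv_of_mul_eq_one_left ?_
  have hq : 1 < q := Fintype.one_lt_card
  rw [← pow_succ, show q - 2 + 1 = q - 1 by omega]
  exact pow_card_sub_one_eq_one a ha

theorem sum_pow_card_sub_one : ∑ w : K, w ^ (q - 1) = -1 := by
  classical
  have hq : 1 < q := Fintype.one_lt_card
  rw [← sum_erase univ (f := fun w : K => w ^ (q - 1)) (zero_pow (by omega)),
    sum_congr rfl fun w hw => pow_card_sub_one_eq_one w (ne_of_mem_erase hw),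
    sum_const, card_erase_of_mem (mem_univ _), card_univ, nsmul_one,
    Nat.cast_sub hq.le, cast_card_eq_zero, Nat.cast_one, zero_sub]

theorem sq_add_add_one_ne_zero (hK : q % 3 = 2) (w : K) : w ^ 2 + w + 1 ≠ 0 := by
  intro h
  obtain ⟨m, hm⟩ : ∃ m, q = 3 * m + 2 := ⟨q / 3, by omega⟩
  by_cases hw1 : w = 1
  · subst hw1
    have h3 : (3 : K) = 0 := by linear_combination h
    have hcard := cast_card_eq_zero K
    rw [hm] at hcard
    push_cast at hcard
    exact one_ne_zero (by linear_combination h3 - hcard + m * h3 : (1 : K) = 0)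
  · -- a root would be a cube root of unity `≠ 1`, but `3 ∤ q - 1`
    have hw0 : w ≠ 0 := by rintro rfl; simp at h
    have hw3 : w ^ 3 = 1 := by linear_combination (w - 1) * h
    have hw := pow_card_sub_one_eq_one w hw0
    rw [hm, show 3 * m + 2 - 1 = 3 * m + 1 by omega, pow_succ, pow_mul, hw3, one_pow,
      one_mul] at hw
    exact hw1 hw

theorem sq_add_mul_add_sq_ne_zero (hK : q % 3 = 2) (u : K) {v : K} (hv : v ≠ 0) :
    u ^ 2 + u * v + v ^ 2 ≠ 0 := by
  have h : u ^ 2 + u * v + v ^ 2 = v ^ 2 * ((u / v) ^ 2 + u / v + 1) := by field_simp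
  rw [h]
  exact mul_ne_zero (pow_ne_zero 2 hv) (sq_add_add_one_ne_zero hK _)

end FiniteField

open FiniteField

variable (K) in
noncomputable def phi3Sum (n : ℕ) : K := ∑ w : K, w ^ n / (w ^ 2 + w + 1)

theorem phi3Sum_add_card (n : ℕ) : phi3Sum K (n + q) = phi3Sum K (n + 1) := by
  simp only [phi3Sum, pow_add, pow_card, pow_one]

theorem phi3Sum_card_sub_one : phi3Sum K (q - 1) = phi3Sum K 2 := by
  rw [phi3Sum, phi3Sum,
    ← Equiv.sum_comp (Equiv.inv K) (fun w : K => w ^ 2 / (w ^ 2 + w + 1))]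
  refine sum_congr rfl fun w _ => ?_
  rcases eq_or_ne w 0 with rfl | hw
  · simp [zero_pow (Nat.sub_ne_zero_of_lt Fintype.one_lt_card)]
  · rw [Equiv.inv_apply, pow_card_sub_one_eq_one w hw]
    field_simp
    ring

theorem phi3Sum_add_two_add (hK : q % 3 = 2) (n : ℕ) :
    phi3Sum K (n + 2) + phi3Sum K (n + 1) + phi3Sum K n = ∑ w : K, w ^ n := by
  simp only [phi3Sum, ← sum_add_distrib]
  refine sum_congr rfl fun w _ => ?_
  rw [← add_div, ← add_div, div_eq_iff (sq_add_add_one_ne_zero hK w)]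
  ring

theorem phi3Sum_add_three (hK : q % 3 = 2) {n : ℕ} (hn : n + 3 ≤ q) :
    phi3Sum K (n + 3) = phi3Sum K n := by
  have h₀ := phi3Sum_add_two_add hK n
  have h₁ := phi3Sum_add_two_add hK (n + 1)
  rw [sum_pow_lt_card_sub_one _ _ (by omega)] at h₀ h₁
  linear_combination h₁ - h₀

theorem phi3Sum_mod_three (hK : q % 3 = 2) {n : ℕ} (hn : n ≤ q) :
    phi3Sum K n = phi3Sum K (n % 3) := by
  induction n using Nat.strong_induction_on with
  | _ n ih =>
    by_cases h3 : n < 3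
    · rw [Nat.mod_eq_of_lt h3]
    · obtain ⟨m, rfl⟩ : ∃ m, n = m + 3 := ⟨n - 3, by omega⟩
      rw [phi3Sum_add_three hK hn, ih m (by omega) (by omega), Nat.add_mod_right]

theorem phi3Sum_two (hK : q % 3 = 2) : phi3Sum K 2 = phi3Sum K 1 := by
  have hq : 1 < q := Fintype.one_lt_card
  rw [← phi3Sum_card_sub_one, phi3Sum_mod_three hK (by omega), show (q - 1) % 3 = 1 by omega]

theorem phi3Sum_zero (hK : q % 3 = 2) : phi3Sum K 0 = -2 * phi3Sum K 1 := by
  have hq : 1 < q := Fintype.one_lt_card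
  have h := phi3Sum_add_two_add hK 0
  rw [sum_pow_lt_card_sub_one _ _ (by omega), phi3Sum_two hK] at h
  linear_combination h

theorem three_mul_phi3Sum_one (hK : q % 3 = 2) : 3 * phi3Sum K 1 = -1 := by
  have hq : 1 < q := Fintype.one_lt_card
  have h := phi3Sum_add_two_add hK (q - 1)
  rw [sum_pow_card_sub_one, show q - 1 + 2 = 1 + q by omega, show q - 1 + 1 = 0 + q by omega,
    phi3Sum_add_card, phi3Sum_add_card, phi3Sum_card_sub_one, phi3Sum_two hK] at h
  linear_combination h

theorem prod_range_three_mul_add_one_phi3Sum (hK : q % 3 = 2) {m : ℕ} (hm : 3 * m + 2 ≤ q) :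
    ∏ k ∈ range (3 * m + 1), phi3Sum K (k + 2) = phi3Sum K 1 * (-2 * phi3Sum K 1 ^ 3) ^ m := by
  induction m with
  | zero => simp [phi3Sum_two hK]
  | succ m ih =>
    rw [show 3 * (m + 1) + 1 = 3 * m + 1 + 1 + 1 + 1 by ring, prod_range_succ, prod_range_succ,
      prod_range_succ, ih (by omega), phi3Sum_mod_three hK (n := 3 * m + 1 + 2) (by omega),
      phi3Sum_mod_three hK (n := 3 * m + 1 + 1 + 2) (by omega),
      phi3Sum_mod_three hK (n := 3 * m + 1 + 1 + 1 + 2) (by omega),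
      show (3 * m + 1 + 2) % 3 = 0 by omega, show (3 * m + 1 + 1 + 2) % 3 = 1 by omega,
      show (3 * m + 1 + 1 + 1 + 2) % 3 = 2 by omega, phi3Sum_zero hK, phi3Sum_two hK]
    ring

theorem prod_range_phi3Sum (hK : q % 3 = 2) :
    ∏ k ∈ range (q - 1), phi3Sum K (k + 2) = (-2) ^ (q / 3) := by
  obtain ⟨m, hm⟩ : ∃ m, q = 3 * m + 2 := ⟨q / 3, by omega⟩
  have hS : phi3Sum K 1 ≠ 0 := by
    intro h
    simpa [h] using three_mul_phi3Sum_one hK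
  have hpow := pow_card_sub_one_eq_one _ hS
  rw [hm, show 3 * m + 2 - 1 = 3 * m + 1 by omega] at hpow ⊢
  rw [prod_range_three_mul_add_one_phi3Sum hK hm.ge, show (3 * m + 2) / 3 = m by omega]
  linear_combination (-2) ^ m * hpow

variable (K) in
noncomputable def invQuadMatrix {ι : Type*} (x : ι → K) : Matrix ι ι K :=
  Matrix.of fun i j => (x i ^ 2 + x i * x j + x j ^ 2)⁻¹

theorem sum_inv_quad_mul_pow_add_two {u : K} (hu : u ≠ 0) (k : ℕ) :
    ∑ v : K, (u ^ 2 + u * v + v ^ 2)⁻¹ * v ^ (k + 2) = u ^ k * phi3Sum K (k + 2) := by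
  rw [phi3Sum, mul_sum, ← Equiv.sum_comp (Equiv.mulLeft₀ u hu)]
  refine sum_congr rfl fun w _ => ?_
  rw [Equiv.mulLeft₀_apply,
    show u ^ 2 + u * (u * w) + (u * w) ^ 2 = u ^ 2 * (w ^ 2 + w + 1) by ring,
    mul_inv, mul_pow, pow_add u, div_eq_mul_inv]
  field_simp

section Enumeration

variable {n : ℕ} {x : Fin n → K}

theorem sum_comp_eq_sum_of_map_zero {M : Type*} [AddCommMonoid M] (hn : q = n + 1)
    (hx : Function.Injective x) (hx0 : ∀ i, x i ≠ 0) {g : K → M} (hg : g 0 = 0) :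
    ∑ i, g (x i) = ∑ v, g v := by
  classical
  have himage : univ.image x = univ.erase 0 := by
    refine eq_of_subset_of_card_le (fun v hv => ?_) ?_
    · obtain ⟨i, -, rfl⟩ := mem_image.mp hv
      exact mem_erase.mpr ⟨hx0 i, mem_univ _⟩
    · rw [card_image_of_injective _ hx, card_erase_of_mem (mem_univ _), card_univ, hn,
        card_univ, Fintype.card_fin, Nat.add_sub_cancel]
  rw [← sum_image hx.injOn, himage, sum_erase _ hg]

theorem invQuadMatrix_mul_vandermonde (hn : q = n + 1) (hx : Function.Injective x)
    (hx0 : ∀ i, x i ≠ 0) :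
    invQuadMatrix K x * (Matrix.diagonal (fun i => x i ^ 2) * Matrix.vandermonde x)
      = Matrix.vandermonde x * Matrix.diagonal (fun k : Fin n => phi3Sum K (k + 2)) := by
  ext i k
  rw [Matrix.mul_diagonal, Matrix.mul_apply, Matrix.vandermonde_apply,
    ← sum_inv_quad_mul_pow_add_two (hx0 i),
    ← sum_comp_eq_sum_of_map_zero hn hx hx0
      (g := fun v => (x i ^ 2 + x i * v + v ^ 2)⁻¹ * v ^ ((k : ℕ) + 2)) (by simp)]
  simp only [invQuadMatrix, Matrix.diagonal_mul, Matrix.of_apply, Matrix.vandermonde_apply]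
  exact sum_congr rfl fun j _ => by ring

theorem det_invQuadMatrix_mul_prod_sq (hn : q = n + 1) (hx : Function.Injective x)
    (hx0 : ∀ i, x i ≠ 0) :
    (invQuadMatrix K x).det * (∏ i, x i) ^ 2 = ∏ k ∈ range n, phi3Sum K (k + 2) := by
  have h := congrArg Matrix.det (invQuadMatrix_mul_vandermonde hn hx hx0)
  rw [Matrix.det_mul, Matrix.det_mul, Matrix.det_mul, Matrix.det_diagonal, Matrix.det_diagonal,
    prod_pow, ← mul_assoc, mul_comm (Matrix.vandermonde x).det] at h
  rw [mul_right_cancel₀ (Matrix.det_vandermonde_ne_zero_iff.mpr hx) h,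
    Fin.prod_univ_eq_prod_range (fun k => phi3Sum K (k + 2))]

theorem quadraticChar_det_invQuadMatrix [DecidableEq K] (hK : q % 3 = 2) (hodd : Odd q)
    (hn : q = n + 1) (hx : Function.Injective x) (hx0 : ∀ i, x i ≠ 0) :
    quadraticChar K (invQuadMatrix K x).det = quadraticChar K (-2) := by
  have hprod : ∏ k ∈ range n, phi3Sum K (k + 2) = (-2) ^ (q / 3) := by
    rw [show n = q - 1 by omega]
    exact prod_range_phi3Sum hK
  have hodd3 : Odd (q / 3) := by
    obtain ⟨r, hr⟩ := hodd
    exact ⟨(q / 3 - 1) / 2, by omega⟩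
  have h := congrArg (quadraticChar K) ((det_invQuadMatrix_mul_prod_sq hn hx hx0).trans hprod)
  rwa [map_mul, quadraticChar_sq_one' (prod_ne_zero_iff.mpr fun i _ => hx0 i), mul_one, map_pow,
    ← MulChar.pow_apply' _ hodd3.pos.ne', (quadraticChar_isQuadratic K).pow_odd hodd3] at h

end Enumeration

theorem ZMod.natCast_add_one_injective (p : ℕ) :
    Function.Injective fun i : Fin (p - 1) => ((i : ℕ) : ZMod p) + 1 := by
  intro i j h
  simp only [add_left_inj, ZMod.natCast_eq_natCast_iff'] at h
  rwa [Nat.mod_eq_of_lt (by omega), Nat.mod_eq_of_lt (by omega), ← Fin.ext_iff] at h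

theorem ZMod.natCast_add_one_ne_zero {p : ℕ} (i : Fin (p - 1)) : ((i : ℕ) : ZMod p) + 1 ≠ 0 := by
  rw [← Nat.cast_succ, Ne, ZMod.natCast_eq_zero_iff]
  intro h
  have := Nat.le_of_dvd i.val.succ_pos h
  omega

theorem intCast_Dp_one_one {p : ℕ} [Fact p.Prime] (hp3 : p % 3 = 2) :
    ((Dp p 1 1 : ℤ) : ZMod p)
      = (invQuadMatrix (ZMod p) fun i : Fin (p - 1) => ((i : ℕ) : ZMod p) + 1).det := by
  rw [Dp, Int.cast_det]
  congr 1
  ext i j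
  have hK : Fintype.card (ZMod p) % 3 = 2 := by rwa [ZMod.card]
  have h := pow_card_sub_two_eq_inv_s2
    (sq_add_mul_add_sq_ne_zero hK (((i : ℕ) : ZMod p) + 1) (ZMod.natCast_add_one_ne_zero j))
  rw [ZMod.card] at h
  simp only [invQuadMatrix, Matrix.map_apply, Matrix.of_apply, ← h]
  push_cast
  ring

theorem stmt2 (p : ℕ) [Fact p.Prime] (hp2 : p ≠ 2) (hp3 : p % 3 = 2) :
    legendreSym p (Dp p 1 1) = legendreSym p (-2) := by
  have hp : p.Prime := Fact.out
  rw [legendreSym, legendreSym, intCast_Dp_one_one hp3, Int.cast_neg, Int.cast_ofNat]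
  refine quadraticChar_det_invQuadMatrix ?_ ?_ ?_ (ZMod.natCast_add_one_injective p)
    ZMod.natCast_add_one_ne_zero <;> rw [ZMod.card]
  · exact hp3
  · exact hp.odd_of_ne_two hp2
  · have := hp.one_le
    omega
end

section
/- Let p be an odd prime and let b, c be integers. Then (4c - b²)·C(p-2, 0)_{b,c} ≡ C(p-1, -1)_{b,c} + c·C(p-1, 1)_{b,c} - b (mod p). -/
/-!
Over `𝔽_p` put `A = X² + bX + c`, so that `C(n,k)_{b,c}` is the coefficient of `X^(n+k)`
in `A^n`. By Frobenius `A^p = X^(2p) + bX^p + c`, and comparing coefficients of `X^p` in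
`A · A^(p-1) = A^p` gives `C(p-1,-1) + b C(p-1,0) + c C(p-1,1) = b`. Completing the square,
`4A = (2X + b)² + (4c - b²)` with `2X + b = A'`, yields a linear recurrence between the
coefficients of `A^(n+1)` and `A^n`; at `n = p - 2` it reads `(4c - b²) C(p-2,0) = -b C(p-1,0)`.
-/

open Polynomial in
/-- The generalized trinomial coefficient `C(n,k)_{b,c}`: the coefficient of `x^(n+k)`
in `(x² + b·x + c)^n`; it vanishes when `n + k < 0` (in particular when `|k| > n`). -/
noncomputable def gtc (b c : ℤ) (n : ℕ) (k : ℤ) : ℤ :=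
  if 0 ≤ (n : ℤ) + k then ((X ^ 2 + C b * X + C c) ^ n).coeff ((n : ℤ) + k).toNat else 0

open Polynomial

theorem gtc_eq_coeff {b c : ℤ} {n : ℕ} {k : ℤ} {j : ℕ} (h : (n : ℤ) + k = j) :
    gtc b c n k = ((X ^ 2 + C b * X + C c) ^ n).coeff j := by
  rw [gtc, if_pos (by omega), h, Int.toNat_natCast]

theorem intCast_coeff_quadratic_pow {R : Type*} [CommRing R] (b c : ℤ) (n j : ℕ) :
    ((((X ^ 2 + C b * X + C c) ^ n).coeff j : ℤ) : R) =
      ((X ^ 2 + C (b : R) * X + C (c : R)) ^ n).coeff j := by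
  have h : (X ^ 2 + C (b : R) * X + C (c : R)) ^ n =
      ((X ^ 2 + C b * X + C c) ^ n).map (Int.castRingHom R) := by simp
  rw [h, coeff_map]
  rfl

section

variable {R : Type*} [CommRing R]

theorem coeff_X_mul_derivative (f : R[X]) (j : ℕ) :
    (X * derivative f).coeff j = j * f.coeff j := by
  cases j with
  | zero => simp
  | succ j => rw [coeff_X_mul, coeff_derivative]; push_cast; ring

theorem coeff_quadratic_mul (b c : R) (f : R[X]) (j : ℕ) :
    ((X ^ 2 + C b * X + C c) * f).coeff (j + 2) =
      f.coeff j + b * f.coeff (j + 1) + c * f.coeff (j + 2) := by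
  simp only [add_mul, coeff_add, mul_assoc, coeff_C_mul, coeff_X_pow_mul, coeff_X_mul]

theorem coeff_quadratic_pow_char (b c : R) (p : ℕ) [Fact p.Prime] [CharP R p] :
    ((X ^ 2 + C b * X + C c) ^ p).coeff p = b ^ p := by
  have hp := (Fact.out : p.Prime).pos
  rw [add_pow_char, add_pow_char, mul_pow, ← C_pow, ← C_pow, ← pow_mul]
  simp only [coeff_add, coeff_X_pow, coeff_C_mul_X_pow, coeff_C]
  simp [hp.ne', show p ≠ 2 * p by omega]

/-- Completing the square, `4 (X² + bX + c) = (2X + b)² + (4c - b²)`, where `2X + b` is the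
derivative of `X² + bX + c`. -/
theorem four_mul_quadratic_pow_succ (b c : R) (n : ℕ) :
    C (4 * (n + 1 : R)) * (X ^ 2 + C b * X + C c) ^ (n + 1) =
      (C 2 * X + C b) * derivative ((X ^ 2 + C b * X + C c) ^ (n + 1)) +
        C ((n + 1) * (4 * c - b ^ 2)) * (X ^ 2 + C b * X + C c) ^ n := by
  rw [derivative_pow]
  simp only [derivative_add, derivative_X_pow, derivative_mul, derivative_C, derivative_X]
  simp only [map_mul, map_add, map_sub, map_pow, map_natCast, map_one, map_ofNat,
    Nat.add_sub_cancel]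
  push_cast
  ring

theorem coeff_quadratic_pow_succ_recurrence (b c : R) (n j : ℕ) :
    4 * (n + 1) * ((X ^ 2 + C b * X + C c) ^ (n + 1)).coeff j =
      2 * j * ((X ^ 2 + C b * X + C c) ^ (n + 1)).coeff j +
        b * (j + 1) * ((X ^ 2 + C b * X + C c) ^ (n + 1)).coeff (j + 1) +
        (n + 1) * (4 * c - b ^ 2) * ((X ^ 2 + C b * X + C c) ^ n).coeff j := by
  have h := congrArg (coeff · j) (four_mul_quadratic_pow_succ b c n)
  simp only [add_mul, coeff_add, coeff_C_mul, mul_assoc, coeff_X_mul_derivative,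
    coeff_derivative] at h
  linear_combination h

end

theorem stmt3_general (p : ℕ) (hp : p.Prime) (b c : ℤ) :
    (4 * c - b ^ 2) * gtc b c (p - 2) 0 ≡
      gtc b c (p - 1) (-1) + c * gtc b c (p - 1) 1 - b [ZMOD (p : ℤ)] := by
  have := Fact.mk hp
  obtain ⟨n, rfl⟩ : ∃ n, p = n + 2 := ⟨p - 2, by have := hp.two_le; omega⟩
  rw [Nat.add_sub_cancel, show n + 2 - 1 = n + 1 by omega,
    gtc_eq_coeff (j := n) (by simp), gtc_eq_coeff (j := n) (by push_cast; ring),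
    gtc_eq_coeff (j := n + 2) (by push_cast; ring), ← ZMod.intCast_eq_intCast_iff]
  push_cast
  simp only [intCast_coeff_quadratic_pow]
  have hfrob := coeff_quadratic_mul (b : ZMod (n + 2)) c
    ((X ^ 2 + C (b : ZMod (n + 2)) * X + C (c : ZMod (n + 2))) ^ (n + 1)) n
  rw [← pow_succ', coeff_quadratic_pow_char, ZMod.pow_card] at hfrob
  have hrec := coeff_quadratic_pow_succ_recurrence (b : ZMod (n + 2)) c n n
  have hchar : ((n : ℕ) : ZMod (n + 2)) + 2 = 0 := by exact_mod_cast ZMod.natCast_self (n + 2)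
  set A : (ZMod (n + 2))[X] := X ^ 2 + C (b : ZMod (n + 2)) * X + C (c : ZMod (n + 2))
  linear_combination hfrob + hrec -
    (2 * (A ^ (n + 1)).coeff n - b * (A ^ (n + 1)).coeff (n + 1) -
      (4 * c - b ^ 2) * (A ^ n).coeff n) * hchar

theorem stmt3 (p : ℕ) (hp : p.Prime) (hp2 : p ≠ 2) (b c : ℤ) :
    (4 * c - b ^ 2) * gtc b c (p - 2) 0 ≡
      gtc b c (p - 1) (-1) + c * gtc b c (p - 1) 1 - b [ZMOD (p : ℤ)] :=
  stmt3_general p hp b c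
end

section
/- Let p be an odd prime, let b, c be integers, and let k be an integer with 0 < |k| ≤ p-2. Then (4c - b²)·C(p-2, k)_{b,c} ≡ (k+1)·C(p-1, k-1)_{b,c} - (k-1)·c·C(p-1, k+1)_{b,c} (mod p). -/
open Polynomial

namespace Polynomial

variable {R : Type*} [CommRing R]

noncomputable def monicQuadratic (b c : R) : R[X] := X ^ 2 + C b * X + C c

variable (b c : R)

theorem derivative_monicQuadratic : derivative (monicQuadratic b c) = 2 * X + C b := by
  simp [monicQuadratic]
  ring

theorem monicQuadratic_pow_identity (m : ℕ) :
    derivative (X ^ 3 * monicQuadratic b c ^ (m + 1))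
        - C c * derivative (X * monicQuadratic b c ^ (m + 1))
        + C (2 * c) * monicQuadratic b c ^ (m + 1) - monicQuadratic b c ^ (m + 2) =
      C (4 * c - b ^ 2) * X ^ 2 * monicQuadratic b c ^ m
        + (m + 2 : R[X]) * (X * (X ^ 2 - C c) * (2 * X + C b) * monicQuadratic b c ^ m) := by
  rw [derivative_mul, derivative_mul, derivative_X_pow, derivative_pow_succ,
    derivative_monicQuadratic, pow_succ, pow_succ _ (m + 1), pow_succ _ m]
  generalize monicQuadratic b c ^ m = q
  simp only [monicQuadratic, derivative_X, map_add, map_mul, map_sub, map_pow,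
    map_natCast, map_ofNat, map_one]
  push_cast
  ring

theorem monicQuadratic_pow_char (p : ℕ) [Fact p.Prime] [CharP R p] :
    monicQuadratic b c ^ p = X ^ (2 * p) + C (b ^ p) * X ^ p + C (c ^ p) := by
  rw [monicQuadratic, add_pow_char, add_pow_char, ← pow_mul, mul_pow, ← map_pow, ← map_pow]

theorem coeff_monicQuadratic_pow_char_eq_zero (p : ℕ) [Fact p.Prime] [CharP R p] {j : ℕ}
    (h0 : j ≠ 0) (h1 : j ≠ p) (h2 : j ≠ 2 * p) : (monicQuadratic b c ^ p).coeff j = 0 := by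
  rw [monicQuadratic_pow_char, coeff_add, coeff_add, coeff_C_mul, coeff_X_pow, coeff_X_pow,
    coeff_C, if_neg h2, if_neg h1, if_neg h0, mul_zero, add_zero, add_zero]

theorem coeff_monicQuadratic_pow_sub_two (p : ℕ) [Fact p.Prime] [CharP R p] {j : ℕ}
    (h1 : j + 2 ≠ p) (h2 : j + 2 ≠ 2 * p) :
    (4 * c - b ^ 2) * (monicQuadratic b c ^ (p - 2)).coeff j =
      (j + 3) * (monicQuadratic b c ^ (p - 1)).coeff j
        - (j + 1) * c * (monicQuadratic b c ^ (p - 1)).coeff (j + 2) := by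
  obtain ⟨m, rfl⟩ : ∃ m, p = m + 2 := ⟨p - 2, by have := (Fact.out : p.Prime).two_le; omega⟩
  have hchar : ((m + 2 : ℕ) : R[X]) = 0 := CharP.cast_eq_zero _ _
  have key := congrArg (coeff · (j + 2)) (monicQuadratic_pow_identity b c m)
  push_cast at hchar
  simp only [hchar, zero_mul, add_zero, coeff_sub, coeff_add, coeff_derivative, coeff_C_mul,
    mul_assoc, coeff_X_pow_mul, coeff_X_mul] at key
  rw [coeff_monicQuadratic_pow_char_eq_zero b c _ (by omega) h1 h2] at key
  rw [show m + 2 - 2 = m by omega, show m + 2 - 1 = m + 1 by omega]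
  push_cast at key
  linear_combination -key

end Polynomial

theorem intCast_gtc {R : Type*} [CommRing R] (b c : ℤ) (n : ℕ) (k : ℤ) (j : ℕ)
    (h : (n : ℤ) + k = j) :
    ((gtc b c n k : ℤ) : R) = (monicQuadratic (b : R) (c : R) ^ n).coeff j := by
  rw [gtc, if_pos (by omega), h, Int.toNat_natCast, ← eq_intCast (Int.castRingHom R),
    ← coeff_map, Polynomial.map_pow]
  simp [monicQuadratic]

theorem stmt4_general (p : ℕ) (hp : p.Prime) (b c k : ℤ)
    (hk0 : 0 < |k|) (hk : |k| ≤ (p : ℤ) - 2) :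
    (4 * c - b ^ 2) * gtc b c (p - 2) k ≡
      (k + 1) * gtc b c (p - 1) (k - 1) - (k - 1) * c * gtc b c (p - 1) (k + 1)
      [ZMOD (p : ℤ)] := by
  have : Fact p.Prime := ⟨hp⟩
  have hp_two := hp.two_le
  obtain ⟨hk_lower, hk_upper⟩ := abs_le.mp hk
  have hk_ne : k ≠ 0 := abs_pos.mp hk0
  obtain ⟨j, hj⟩ : ∃ j : ℕ, (j : ℤ) = p - 2 + k := ⟨_, Int.toNat_of_nonneg (by omega)⟩
  have hjp : (j : ZMod p) = k - 2 := by
    rw [← Int.cast_natCast, hj]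
    push_cast [ZMod.natCast_self]
    ring
  rw [← ZMod.intCast_eq_intCast_iff]
  push_cast
  rw [intCast_gtc b c (p - 2) k j (by omega), intCast_gtc b c (p - 1) (k - 1) j (by omega),
    intCast_gtc b c (p - 1) (k + 1) (j + 2) (by omega),
    coeff_monicQuadratic_pow_sub_two _ _ p (by omega) (by omega), hjp]
  ring

theorem stmt4 (p : ℕ) (hp : p.Prime) (hp2 : p ≠ 2) (b c k : ℤ)
    (hk0 : 0 < |k|) (hk : |k| ≤ (p : ℤ) - 2) :
    (4 * c - b ^ 2) * gtc b c (p - 2) k ≡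
      (k + 1) * gtc b c (p - 1) (k - 1) - (k - 1) * c * gtc b c (p - 1) (k + 1)
      [ZMOD (p : ℤ)] :=
  stmt4_general p hp b c k hk0 hk
end

section
/- Let n ≥ 1 be an integer, let b, c be integers, and let k be any integer. Then k · C(n, k)_{b,c} = n · (C(n-1, k-1)_{b,c} - c · C(n-1, k+1)_{b,c}). -/
/-!
With `P = X² + bX + c`, the Euler operator `X · d/dX` multiplies the coefficient of `X^i` by `i`,
and `X · (P^(n+1))' = (n+1) P^n · X P' = (n+1) (P^(n+1) + X² P^n - c P^n)` because
`X P' = 2X² + bX = P + X² - c`. Comparing coefficients of `X^(n+1+k)` on both sides gives the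
recurrence, once coefficients are indexed by all integers (vanishing at negative indices).
-/

namespace Polynomial

variable {R : Type*}

section Semiring

variable [Semiring R]

noncomputable def intCoeff (p : R[X]) (i : ℤ) : R :=
  if 0 ≤ i then p.coeff i.toNat else 0

@[simp]
lemma intCoeff_natCast (p : R[X]) (m : ℕ) : p.intCoeff m = p.coeff m := by
  simp [intCoeff]

lemma intCoeff_of_neg (p : R[X]) {i : ℤ} (hi : i < 0) : p.intCoeff i = 0 :=
  if_neg hi.not_ge

@[simp]
lemma intCoeff_zero (i : ℤ) : (0 : R[X]).intCoeff i = 0 := by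
  simp [intCoeff]

@[simp]
lemma intCoeff_add (p q : R[X]) (i : ℤ) : (p + q).intCoeff i = p.intCoeff i + q.intCoeff i := by
  unfold intCoeff
  split_ifs <;> simp

@[simp]
lemma intCoeff_C_mul (a : R) (p : R[X]) (i : ℤ) : (C a * p).intCoeff i = a * p.intCoeff i := by
  unfold intCoeff
  split_ifs <;> simp

lemma intCoeff_X_pow_mul (p : R[X]) (d : ℕ) (i : ℤ) : (X ^ d * p).intCoeff i = p.intCoeff (i - d) := by
  rcases lt_or_ge i 0 with hi | hi
  · rw [intCoeff_of_neg _ hi, intCoeff_of_neg _ (by omega)]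
  lift i to ℕ using hi
  rw [intCoeff_natCast, coeff_X_pow_mul']
  split_ifs with hd
  · rw [← Nat.cast_sub hd, intCoeff_natCast]
  · rw [intCoeff_of_neg _ (by omega)]

end Semiring

section Ring

variable [Ring R]

@[simp]
lemma intCoeff_sub (p q : R[X]) (i : ℤ) : (p - q).intCoeff i = p.intCoeff i - q.intCoeff i := by
  unfold intCoeff
  split_ifs <;> simp

lemma intCoeff_X_mul_derivative (p : R[X]) (i : ℤ) :
    (X * derivative p).intCoeff i = i * p.intCoeff i := by
  rcases lt_or_ge i 0 with hi | hi
  · simp [intCoeff_of_neg _ hi]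
  lift i to ℕ using hi
  rw [intCoeff_natCast, intCoeff_natCast, Int.cast_natCast]
  rcases i with _ | m
  · simp
  · rw [coeff_X_mul, coeff_derivative, ← Nat.cast_succ]
    exact (Nat.cast_commute _ _).symm.eq

end Ring

lemma X_mul_derivative_trinomial_pow_succ [CommRing R] (b c : R) (n : ℕ) :
    X * derivative ((X ^ 2 + C b * X + C c) ^ (n + 1)) =
      C (n + 1 : R) * ((X ^ 2 + C b * X + C c) ^ (n + 1) +
        X ^ 2 * (X ^ 2 + C b * X + C c) ^ n - C c * (X ^ 2 + C b * X + C c) ^ n) := by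
  rw [derivative_pow_succ]
  simp only [derivative_add, derivative_X_pow, derivative_C_mul_X, derivative_C, Nat.cast_ofNat,
    C_ofNat, C_add, C_1, map_natCast]
  ring

lemma intCoeff_trinomial_pow_succ [CommRing R] (b c : R) (n : ℕ) (i : ℤ) :
    (i - (n + 1)) * ((X ^ 2 + C b * X + C c) ^ (n + 1)).intCoeff i =
      (n + 1) * (((X ^ 2 + C b * X + C c) ^ n).intCoeff (i - 2) -
        c * ((X ^ 2 + C b * X + C c) ^ n).intCoeff i) := by
  have h := congrArg (intCoeff · i) (X_mul_derivative_trinomial_pow_succ b c n)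
  simp only [intCoeff_X_mul_derivative, intCoeff_C_mul, intCoeff_add, intCoeff_sub,
    intCoeff_X_pow_mul] at h
  linear_combination h

end Polynomial

open Polynomial

lemma gtc_eq_intCoeff (b c : ℤ) (n : ℕ) (k : ℤ) :
    gtc b c n k = ((X ^ 2 + C b * X + C c) ^ n).intCoeff (n + k) := rfl

theorem stmt6_general (n : ℕ) (b c : ℤ) (k : ℤ) :
    k * gtc b c n k = (n : ℤ) * (gtc b c (n - 1) (k - 1) - c * gtc b c (n - 1) (k + 1)) := by
  rcases n with _ | n
  · -- `k * C(0,k)_{b,c}` is the coefficient of `x^k` in `X * derivative 1 = 0`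
    simpa [gtc_eq_intCoeff] using (intCoeff_X_mul_derivative (1 : ℤ[X]) k).symm
  · have h := intCoeff_trinomial_pow_succ b c n (n + (k + 1))
    rw [Int.cast_id, show (n : ℤ) + (k + 1) - (n + 1) = k by ring,
      show (n : ℤ) + (k + 1) - 2 = n + (k - 1) by ring] at h
    rw [gtc_eq_intCoeff, gtc_eq_intCoeff, gtc_eq_intCoeff, Nat.add_sub_cancel,
      show ((n + 1 : ℕ) : ℤ) + k = n + (k + 1) by push_cast; ring, Nat.cast_succ, h]

theorem stmt6 (n : ℕ) (hn : 1 ≤ n) (b c : ℤ) (k : ℤ) :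
    k * gtc b c n k = (n : ℤ) * (gtc b c (n - 1) (k - 1) - c * gtc b c (n - 1) (k + 1)) :=
  stmt6_general n b c k
end

section
/- Let p be an odd prime, let b, c be integers, and let k be an integer with -p ≤ k ≤ p. Then (k+1)·C(p-1, k-1)_{b,c} - (k-1)·c·C(p-1, k+1)_{b,c} ≡ C(p, k)_{b,c} - (b² - 4c)·C(p-2, k)_{b,c} (mod p). -/
/-!
With `T = x + b + c/x` and the Euler operator `θ = x d/dx` one has `θT = x - c/x` and
`(x - c/x)² = (T - b)² - 4c`, hence
`2(x + c/x) T^(n+1) + (x - c/x) θ(T^(n+1)) = T^(n+2) - (b² - 4c) T^n + (n + 2)(x - c/x)² T^n`.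
Reading off the coefficient of `x^k` gives an exact identity between trinomial coefficients
whose last term is a multiple of `n + 2`; for `n + 2 = p` it vanishes modulo `p`.
-/

open Polynomial

theorem coeff_X_mul_derivative_s8 {R : Type*} [Semiring R] (u : R[X]) (m : ℕ) :
    (X * derivative u).coeff m = (m : R) * u.coeff m := by
  cases m with
  | zero => simp
  | succ m => rw [coeff_X_mul, coeff_derivative, ← Nat.cast_succ, Nat.cast_comm]

-- The Laurent identity times `x^(n+4)`; conjugating `θ` by `x^(n+4)` shifts it by `n + 4`.
theorem trinomial_euler_identity {R : Type*} [CommRing R] (b c : R) (n : ℕ) :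
    let f : R[X] := X ^ 2 + C b * X + C c
    X * derivative (X ^ 4 * f ^ (n + 1)) - C ((n : R) + 3) * (X ^ 4 * f ^ (n + 1))
        - C c * (X * derivative (X ^ 2 * f ^ (n + 1)) - C ((n : R) + 5) * (X ^ 2 * f ^ (n + 1))) =
      X ^ 2 * f ^ (n + 2) - C (b ^ 2 - 4 * c) * (X ^ 4 * f ^ n)
        + C ((n : R) + 2) *
          (X ^ 6 * f ^ n - C (2 * c) * (X ^ 4 * f ^ n) + C (c ^ 2) * (X ^ 2 * f ^ n)) := by
  intro f
  have hf : derivative f = 2 * X + C b := by simp [f]; ring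
  simp only [derivative_mul, derivative_pow_succ, derivative_X, hf]
  rw [pow_succ f (n + 1), pow_succ f n]
  generalize f ^ n = g
  simp only [f, map_add, map_sub, map_mul, map_pow, map_one, map_natCast, map_ofNat]
  ring

theorem gtc_eq_coeff_X_pow_mul (b c : ℤ) (n : ℕ) (k : ℤ) {s m : ℕ}
    (hm : (m : ℤ) = n + k + s) :
    gtc b c n k = ((X : ℤ[X]) ^ s * (X ^ 2 + C b * X + C c) ^ n).coeff m := by
  rw [coeff_X_pow_mul', gtc]
  by_cases h : 0 ≤ (n : ℤ) + k
  · rw [if_pos h, if_pos (by omega)]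
    congr 1
    omega
  · rw [if_neg h, if_neg (by omega)]

theorem gtc_of_add_neg (b c : ℤ) {n : ℕ} {k : ℤ} (h : (n : ℤ) + k < 0) : gtc b c n k = 0 :=
  if_neg (by omega)

theorem gtc_euler_recurrence (b c : ℤ) (n : ℕ) (k : ℤ) :
    (k + 1) * gtc b c (n + 1) (k - 1) - (k - 1) * c * gtc b c (n + 1) (k + 1) =
      gtc b c (n + 2) k - (b ^ 2 - 4 * c) * gtc b c n k
        + (n + 2) * (gtc b c n (k - 2) - 2 * c * gtc b c n k + c ^ 2 * gtc b c n (k + 2)) := by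
  rcases lt_or_ge ((n : ℤ) + k + 4) 0 with hneg | hnonneg
  · simp (disch := push_cast; omega) only [gtc_of_add_neg]
    ring
  obtain ⟨m, hm⟩ : ∃ m : ℕ, (m : ℤ) = n + k + 4 := ⟨_, Int.toNat_of_nonneg hnonneg⟩
  have h := congrArg (coeff · m) (trinomial_euler_identity b c n)
  simp only [coeff_sub, coeff_add, coeff_C_mul, coeff_X_mul_derivative_s8, hm] at h
  rw [gtc_eq_coeff_X_pow_mul b c (n + 1) (k - 1) (s := 4) (m := m) (by push_cast; omega),
    gtc_eq_coeff_X_pow_mul b c (n + 1) (k + 1) (s := 2) (m := m) (by push_cast; omega),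
    gtc_eq_coeff_X_pow_mul b c (n + 2) k (s := 2) (m := m) (by push_cast; omega),
    gtc_eq_coeff_X_pow_mul b c n (k - 2) (s := 6) (m := m) (by push_cast; omega),
    gtc_eq_coeff_X_pow_mul b c n k (s := 4) (m := m) (by push_cast; omega),
    gtc_eq_coeff_X_pow_mul b c n (k + 2) (s := 2) (m := m) (by push_cast; omega)]
  linear_combination h

theorem stmt8_general (p : ℕ) (hp : p.Prime) (b c k : ℤ) :
    (k + 1) * gtc b c (p - 1) (k - 1) - (k - 1) * c * gtc b c (p - 1) (k + 1) ≡
      gtc b c p k - (b ^ 2 - 4 * c) * gtc b c (p - 2) k [ZMOD (p : ℤ)] := by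
  obtain ⟨n, rfl⟩ : ∃ n, p = n + 2 := ⟨p - 2, by have := hp.two_le; omega⟩
  rw [show n + 2 - 1 = n + 1 by omega, show n + 2 - 2 = n by omega, gtc_euler_recurrence]
  push_cast
  exact Int.modEq_add_fac_self

theorem stmt8 (p : ℕ) (hp : p.Prime) (hp2 : p ≠ 2) (b c k : ℤ)
    (hk1 : -(p : ℤ) ≤ k) (hk2 : k ≤ (p : ℤ)) :
    (k + 1) * gtc b c (p - 1) (k - 1) - (k - 1) * c * gtc b c (p - 1) (k + 1) ≡
      gtc b c p k - (b ^ 2 - 4 * c) * gtc b c (p - 2) k [ZMOD (p : ℤ)] :=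
  stmt8_general p hp b c k
end

section
/- Let p be an odd prime. Then for every integer k with 0 ≤ k ≤ p one has C(p-1, p-k)_{1,1} ≡ χ₃(k) (mod p), where χ₃(k) is the Legendre symbol (k/3). -/
open Polynomial

private lemma chi_mod' (k : ℕ) : legendreSym 3 (k : ℤ) =
    if k % 3 = 0 then 0 else if k % 3 = 1 then 1 else -1 := by
  haveI : Fact (Nat.Prime 3) := ⟨by norm_num⟩
  rw [legendreSym.mod]
  have h : (k : ℤ) % (3:ℕ) = (k % 3 : ℕ) := by push_cast; omega
  rw [h]
  have hb : k % 3 < 3 := Nat.mod_lt _ (by norm_num)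
  interval_cases h : k % 3 <;> simp <;> decide

private lemma chi_rec' (k : ℕ) : legendreSym 3 ((k+2 : ℕ) : ℤ) =
    -(legendreSym 3 ((k+1 : ℕ):ℤ) + legendreSym 3 (k:ℤ)) := by
  rw [chi_mod', chi_mod', chi_mod']; omega

private lemma key_coeff (p : ℕ) (hp : p.Prime) :
    ∀ k, k ≤ p → ((X^2+X+1 : (ZMod p)[X])^(p-1)).coeff (2*p-1-k)
      = ((legendreSym 3 (k:ℤ) : ℤ) : ZMod p) := by
  haveI := Fact.mk hp
  have hp1 : 1 ≤ p := hp.one_lt.le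
  set q : (ZMod p)[X] := X^2+X+1 with hq
  have hqdeg : q.natDegree = 2 := by rw [hq]; compute_degree!
  have hqmonic : q.Monic := by rw [hq]; monicity!
  set f : (ZMod p)[X] := q^(p-1) with hf
  have hkey : f * q = X^(2*p) + X^p + 1 := by
    rw [hf, ← pow_succ, Nat.sub_add_cancel hp1, hq]
    rw [add_pow_char, add_pow_char, one_pow, ← pow_mul, mul_comm 2 p]
  have hco : ∀ m : ℕ, f.coeff m + f.coeff (m+1) + f.coeff (m+2)
      = (X^(2*p) + X^p + (1:(ZMod p)[X])).coeff (m+2) := by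
    intro m
    rw [← hkey, hq]
    rw [mul_add, mul_add, mul_one, mul_comm f (X^2), mul_comm f X]
    rw [coeff_add, coeff_add]
    rw [show m+2 = m+1+1 from rfl, coeff_X_mul, coeff_X_pow_mul]
  have hdegf : f.natDegree = 2*p-2 := by
    rw [hf, hqmonic.natDegree_pow, hqdeg]; omega
  have h0 : f.coeff (2*p-1) = 0 := by
    apply coeff_eq_zero_of_natDegree_lt; omega
  have h1 : f.coeff (2*p-2) = 1 := by
    rw [← hdegf]; exact (hqmonic.pow _).coeff_natDegree
  intro k
  induction k using Nat.strong_induction_on with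
  | _ k ih =>
    match k with
    | 0 =>
      intro _
      have : legendreSym 3 ((0:ℕ):ℤ) = 0 := by decide
      rw [this]; simpa using h0
    | 1 =>
      intro _
      have : legendreSym 3 ((1:ℕ):ℤ) = 1 := by decide
      rw [this]
      have : 2*p-1-1 = 2*p-2 := by omega
      rw [this, h1]; simp
    | (j+2) =>
      intro hk
      have hj1 : j+1 ≤ p := by omega
      have hj0 : j ≤ p := by omega
      have e1 := ih (j+1) (by omega) hj1
      have e0 := ih j (by omega) hj0
      have hrec := hco (2*p-1-(j+2))
      have hm1 : 2*p-1-(j+2)+1 = 2*p-1-(j+1) := by omega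
      have hm2 : 2*p-1-(j+2)+2 = 2*p-1-j := by omega
      rw [hm1, hm2, e1, e0] at hrec
      have hrhs : (X^(2*p) + X^p + (1:(ZMod p)[X])).coeff (2*p-1-j) = 0 := by
        rw [coeff_add, coeff_add, coeff_X_pow, coeff_X_pow, coeff_one]
        have h1 : ¬ (2*p-1-j = 2*p) := by omega
        have h2 : ¬ (2*p-1-j = p) := by omega
        have h3 : ¬ (2*p-1-j = 0) := by omega
        simp [h1, h2, h3]
      rw [hrhs] at hrec
      rw [chi_rec']
      push_cast at hrec ⊢
      linear_combination hrec

theorem stmt11 (p : ℕ) (hp : p.Prime) (hp2 : p ≠ 2) (k : ℕ) (hk : k ≤ p) :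
    gtc 1 1 (p - 1) ((p : ℤ) - (k : ℤ)) ≡ legendreSym 3 (k : ℤ) [ZMOD (p : ℤ)] := by
  have hp1 : 1 ≤ p := hp.one_lt.le
  have key := key_coeff p hp k hk
  rw [gtc]
  have hcond : 0 ≤ ((p-1 : ℕ) : ℤ) + ((p:ℤ) - k) := by omega
  rw [if_pos hcond]
  have hN : (((p-1 : ℕ) : ℤ) + ((p:ℤ) - k)).toNat = 2*p-1-k := by omega
  rw [hN]
  rw [← ZMod.intCast_eq_intCast_iff]
  rw [show ((Int.cast : ℤ → ZMod p) = (Int.castRingHom (ZMod p) : ℤ → ZMod p)) from rfl]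
  rw [← Polynomial.coeff_map (Int.castRingHom (ZMod p))]
  rw [Polynomial.map_pow]
  simp only [Polynomial.map_add, Polynomial.map_pow, Polynomial.map_mul, Polynomial.map_X,
    Polynomial.map_C, map_one, Polynomial.map_one, Polynomial.C_1, one_mul]
  exact key
end

section
/- Let p be an odd prime. Then, working in the field ℤ/pℤ, ∏_{1 ≤ i < j ≤ p-1} (i - j)·(i⁻¹ - j⁻¹) = (-1)^((p+1)/2) · ∏_{j=2}^{p-1} ((j-1)!)², where i⁻¹ denotes the multiplicative inverse of i in ℤ/pℤ and both sides are viewed as elements of ℤ/pℤ. -/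
open Finset

lemma aux_swap_prod {M : Type*} [CommMonoid M] (f : ℕ → ℕ → M) (n : ℕ) :
    ∏ i ∈ Icc 1 n, ∏ j ∈ Ioc i n, f i j = ∏ j ∈ Icc 1 n, ∏ i ∈ Ico 1 j, f i j :=
  prod_comm' (by intro i j; simp only [mem_Icc, mem_Ioc, mem_Ico]; omega)

lemma aux_prod_sub (p j : ℕ) :
    ∏ i ∈ Ico 1 j, ((i : ZMod p) - (j : ZMod p)) ^ 2 = ((j - 1).factorial : ZMod p) ^ 2 := by
  have h1 : ∀ i ∈ Ico 1 j, ((i : ZMod p) - (j : ZMod p)) ^ 2 = (((j - i : ℕ) : ZMod p)) ^ 2 := by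
    intro i hi
    simp only [mem_Ico] at hi
    rw [Nat.cast_sub (le_of_lt hi.2)]
    ring
  rw [prod_congr rfl h1, prod_pow, ← Nat.cast_prod]
  congr 2
  rw [Finset.prod_Ico_eq_prod_range]
  have h2 : ∀ k ∈ range (j - 1), j - (1 + k) = (j - 1) - 1 - k + 1 := by
    intro k hk; simp only [mem_range] at hk; omega
  rw [prod_congr rfl h2, prod_range_reflect (fun k => k + 1) (j - 1),
    prod_range_add_one_eq_factorial]

lemma aux_sum_card (n : ℕ) : ∑ i ∈ Icc 1 n, (n - i) = n * (n - 1) / 2 := by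
  have h : Icc 1 n = Ico 1 (n + 1) := by rw [Finset.Ico_add_one_right_eq_Icc]
  rw [h, Finset.sum_Ico_eq_sum_range]
  have h2 : ∀ k ∈ range (n + 1 - 1), n - (1 + k) = n - 1 - k := by
    intro k hk; omega
  rw [Finset.sum_congr rfl h2]
  simp only [Nat.add_sub_cancel]
  rw [Finset.sum_range_reflect (fun k => k) n]
  exact Finset.sum_range_id n

theorem stmt12 (p : ℕ) (hp : p.Prime) (hp2 : p ≠ 2) :
    (∏ i ∈ Finset.Icc 1 (p - 1), ∏ j ∈ Finset.Ioc i (p - 1),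
        (((i : ZMod p) - (j : ZMod p)) * ((i : ZMod p)⁻¹ - (j : ZMod p)⁻¹))) =
      (-1) ^ ((p + 1) / 2) *
        ∏ j ∈ Finset.Icc 2 (p - 1), ((Nat.factorial (j - 1) : ZMod p)) ^ 2 := by
  haveI := Fact.mk hp
  have hp3 : 3 ≤ p := by have := hp.two_le; omega
  obtain ⟨k, hk⟩ := hp.odd_of_ne_two hp2
  have hk1 : 1 ≤ k := by omega
  set n := p - 1 with hn
  have hn2 : n = 2 * k := by omega
  have hne : ∀ i ∈ Icc 1 n, (i : ZMod p) ≠ 0 := by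
    intro i hi
    simp only [mem_Icc] at hi
    rw [Ne, ZMod.natCast_eq_zero_iff]
    intro hd
    have := Nat.le_of_dvd (by omega) hd
    omega
  have hterm : ∀ i ∈ Icc 1 n, ∀ j ∈ Ioc i n,
      ((i : ZMod p) - (j : ZMod p)) * ((i : ZMod p)⁻¹ - (j : ZMod p)⁻¹)
        = ((i : ZMod p) - (j : ZMod p)) ^ 2 *
            ((-1) * ((i : ZMod p)⁻¹ * (j : ZMod p)⁻¹)) := by
    intro i hi j hj
    have hji : j ∈ Icc 1 n := by
      simp only [mem_Icc, mem_Ioc] at *; omega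
    have hi0 := hne i hi
    have hj0 := hne j hji
    field_simp
    ring
  rw [Finset.prod_congr rfl (fun i hi => Finset.prod_congr rfl (hterm i hi))]
  simp only [Finset.prod_mul_distrib]
  have hA : (∏ i ∈ Icc 1 n, ∏ j ∈ Ioc i n, ((i : ZMod p) - (j : ZMod p)) ^ 2)
      = ∏ j ∈ Icc 2 n, ((j - 1).factorial : ZMod p) ^ 2 := by
    rw [aux_swap_prod, Finset.prod_congr rfl (fun j _ => aux_prod_sub p j)]
    have h1 : Icc 1 n = insert 1 (Icc 2 n) := by
      ext x; simp only [mem_Icc, mem_insert]; omega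
    rw [h1, Finset.prod_insert (by simp)]
    simp [Nat.factorial]
  have hconst : (∏ i ∈ Icc 1 n, ∏ _j ∈ Ioc i n, (-1 : ZMod p)) = (-1) ^ (k * (2 * k - 1)) := by
    simp only [Finset.prod_const, Nat.card_Ioc]
    rw [Finset.prod_pow_eq_pow_sum, aux_sum_card]
    congr 1
    rw [hn2, mul_assoc, Nat.mul_div_cancel_left _ (by norm_num : 0 < 2)]
  have hinv : (∏ i ∈ Icc 1 n, ∏ _j ∈ Ioc i n, (i : ZMod p)⁻¹) *
      (∏ i ∈ Icc 1 n, ∏ j ∈ Ioc i n, (j : ZMod p)⁻¹) = -1 := by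
    rw [aux_swap_prod (fun _ j => (j : ZMod p)⁻¹)]
    simp only [Finset.prod_const, Nat.card_Ioc, Nat.card_Ico]
    rw [← Finset.prod_mul_distrib]
    have hc : ∀ i ∈ Icc 1 n,
        ((i : ZMod p)⁻¹) ^ (n - i) * ((i : ZMod p)⁻¹) ^ (i - 1)
          = ((i : ZMod p)⁻¹) ^ (n - 1) := by
      intro i hi; simp only [mem_Icc] at hi
      rw [← pow_add]; congr 1; omega
    rw [Finset.prod_congr rfl hc, Finset.prod_pow, Finset.prod_inv_distrib]
    have hw : (∏ i ∈ Icc 1 n, (i : ZMod p)) = -1 := by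
      rw [← Nat.cast_prod]
      have h : Icc 1 n = Ico 1 (n + 1) := by rw [Finset.Ico_add_one_right_eq_Icc]
      rw [h, Finset.prod_Ico_id_eq_factorial]
      exact ZMod.wilsons_lemma p
    rw [hw, inv_neg, inv_one]
    exact Odd.neg_one_pow ⟨k - 1, by omega⟩
  rw [hA, hconst, hinv]
  have hhalf : (p + 1) / 2 = k + 1 := by omega
  rw [hhalf, mul_comm]
  congr 1
  rw [← pow_succ]
  rw [neg_one_pow_eq_pow_mod_two, neg_one_pow_eq_pow_mod_two (n := k + 1)]
  congr 1
  have h2 : (2 * k - 1) % 2 = 1 := by omega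
  have hm := Nat.mul_mod k (2 * k - 1) 2
  rw [h2, mul_one] at hm
  set A := k * (2 * k - 1) with hA2
  omega
end

section
/- Let p be an odd prime and let b, c be integers. Then for every integer k with 0 ≤ k ≤ p-1 one has C(p-1, p-k)_{b,c} ≡ u_k(-b, c) (mod p). -/
/-- The Lucas sequence `u_n(A,B)`: `u_0 = 0`, `u_1 = 1`, `u_{n+1} = A·u_n - B·u_{n-1}`. -/
def luc (A B : ℤ) : ℕ → ℤ
  | 0 => 0
  | 1 => 1
  | n + 2 => A * luc A B (n + 1) - B * luc A B n

open Polynomial in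
lemma key13 (p : ℕ) [hFact : Fact p.Prime] (hp3 : 3 ≤ p) (b c : ℤ) :
    ∀ k, k ≤ p - 1 →
      (((X : (ZMod p)[X]) ^ 2 + C (b : ZMod p) * X + C (c : ZMod p)) ^ (p - 1)).coeff
          (2 * p - 1 - k) = ((luc (-b) c k : ℤ) : ZMod p) := by
  set b' : ZMod p := (b : ZMod p)
  set c' : ZMod p := (c : ZMod p)
  set f : (ZMod p)[X] := X ^ 2 + C b' * X + C c' with hf
  set g : (ZMod p)[X] := f ^ (p - 1) with hg
  have hmono : f.Monic := by
    have : f = X ^ 2 + (C b' * X + C c') := by rw [hf]; ring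
    rw [this]
    exact monic_X_pow_add (degree_linear_lt)
  have hfdeg : f.natDegree = 2 := by
    have : f = X ^ 2 + (C b' * X + C c') := by rw [hf]; ring
    rw [this]
    compute_degree!
  have hgdeg : g.natDegree = 2 * p - 2 := by
    rw [hg, hmono.natDegree_pow, hfdeg]; omega
  have hfg : f * g = f ^ p := by
    rw [hg, ← pow_succ']
    congr 1
    omega
  have hfp : f ^ p = X ^ (2 * p) + C b' * X ^ p + C c' := by
    rw [hf, add_pow_char, add_pow_char, mul_pow, ← C_pow, ← C_pow, ← pow_mul,
      ZMod.pow_card, ZMod.pow_card]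
  have hrec : ∀ a : ℕ, p + 1 ≤ a + 2 → a + 2 ≤ 2 * p - 1 →
      g.coeff a = -b' * g.coeff (a + 1) - c' * g.coeff (a + 2) := by
    intro a h1 h2
    have hz : (f * g).coeff (a + 2) = 0 := by
      rw [hfg, hfp]
      simp only [coeff_add, coeff_C_mul, coeff_X_pow, coeff_C]
      have e1 : ¬ (a + 2 = 2 * p) := by omega
      have e2 : ¬ (a + 2 = p) := by omega
      have e3 : ¬ (a + 2 = 0) := by omega
      simp [e1, e2, e3]
    have hexp : f * g = X ^ 2 * g + C b' * (X * g) + C c' * g := by rw [hf]; ring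
    have h1' : ((X : (ZMod p)[X]) ^ 2 * g).coeff (a + 2) = g.coeff a :=
      coeff_X_pow_mul g 2 a
    have h2' : ((X : (ZMod p)[X]) * g).coeff (a + 2) = g.coeff (a + 1) :=
      coeff_X_mul g (a + 1)
    rw [hexp] at hz
    simp only [coeff_add, coeff_C_mul, h1', h2'] at hz
    linear_combination hz
  intro k
  induction k using Nat.strong_induction_on with
  | _ k ih =>
    match k with
    | 0 =>
      intro _
      have : g.natDegree < 2 * p - 1 - 0 := by omega
      rw [coeff_eq_zero_of_natDegree_lt this]
      simp [luc]
    | 1 =>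
      intro _
      have e : 2 * p - 1 - 1 = g.natDegree := by omega
      rw [e]
      rw [show g.coeff g.natDegree = g.leadingCoeff from rfl, (hmono.pow (p - 1)).leadingCoeff]
      simp [luc]
    | (k + 2) =>
      intro hk
      have e1 : 2 * p - 1 - (k + 2) = 2 * p - 3 - k := by omega
      have e2 : 2 * p - 3 - k + 1 = 2 * p - 1 - (k + 1) := by omega
      have e3 : 2 * p - 3 - k + 2 = 2 * p - 1 - k := by omega
      rw [e1, hrec (2 * p - 3 - k) (by omega) (by omega), e2, e3,
        ih (k + 1) (by omega) (by omega), ih k (by omega) (by omega)]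
      show _ = ((-b * luc (-b) c (k + 1) - c * luc (-b) c k : ℤ) : ZMod p)
      push_cast
      ring

theorem stmt13 (p : ℕ) (hp : p.Prime) (hp2 : p ≠ 2) (b c : ℤ) (k : ℕ) (hk : k ≤ p - 1) :
    gtc b c (p - 1) ((p : ℤ) - (k : ℤ)) ≡ luc (-b) c k [ZMOD (p : ℤ)] := by
  haveI : Fact p.Prime := ⟨hp⟩
  have hp3 : 3 ≤ p := by
    have h2 := hp.two_le
    rcases Nat.lt_or_ge p 3 with h | h
    · interval_cases p; simp_all
    · exact h
  open Polynomial in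
  have hpos : (0 : ℤ) ≤ ((p - 1 : ℕ) : ℤ) + ((p : ℤ) - (k : ℤ)) := by omega
  have hidx : (((p - 1 : ℕ) : ℤ) + ((p : ℤ) - (k : ℤ))).toNat = 2 * p - 1 - k := by
    omega
  rw [gtc, if_pos hpos, hidx]
  rw [← ZMod.intCast_eq_intCast_iff]
  rw [← key13 p hp3 b c k hk]
  have hcast : ∀ (q : Polynomial ℤ) (n : ℕ),
      ((q.coeff n : ℤ) : ZMod p) = (q.map (Int.castRingHom (ZMod p))).coeff n := by
    intro q n; simp [Polynomial.coeff_map]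
  rw [hcast]
  simp [Polynomial.map_pow]
end

section
/- Let p be an odd prime and let b, c be integers with p ∤ c(b² - 4c). For 2 ≤ k ≤ p-2 set U(k) = C(p-2, k)_{b,c} + c^(p-1-k)·C(p-2, p-1-k)_{b,c}. If U(k) ≡ 0 (mod p) for some k with 2 ≤ k ≤ p-2, then the Legendre symbol (D_p(b,c)/p) equals 0. -/
open Polynomial Finset

private lemma coeff_comp_CmulX (p : ℤ[X]) (a : ℤ) (m : ℕ) :
    (p.comp (C a * X)).coeff m = p.coeff m * a ^ m := by
  induction p using Polynomial.induction_on' with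
  | add f g hf hg => simp only [add_comp, coeff_add, hf, hg, add_mul]
  | monomial n r =>
    rw [monomial_comp, mul_pow, ← C_pow, ← mul_assoc, ← C_mul]
    rw [coeff_C_mul, coeff_monomial, coeff_X_pow]
    by_cases h : n = m
    · simp [h, mul_comm]
    · simp [h, Ne.symm h]

private lemma reflect_pow_two (f : ℤ[X]) (hf : f.natDegree ≤ 2) (n : ℕ) :
    reflect (2 * n) (f ^ n) = (reflect 2 f) ^ n := by
  induction n with
  | zero => simp
  | succ k ih =>
    have h1 : (f ^ k).natDegree ≤ 2 * k :=
      le_trans (natDegree_pow_le) (by nlinarith)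
    have h2 : 2 * (k + 1) = 2 * k + 2 := by ring
    rw [h2, pow_succ, reflect_mul (f ^ k) f h1 hf, ih, pow_succ]

private lemma rev_coeff (b c : ℤ) (n m : ℕ) (hm : m ≤ 2 * n) :
    ((X ^ 2 + C b * X + C c) ^ n).coeff m * c ^ m
      = c ^ n * ((X ^ 2 + C b * X + C c) ^ n).coeff (2 * n - m) := by
  set f : ℤ[X] := X ^ 2 + C b * X + C c with hf
  have hdf : f.natDegree ≤ 2 := by
    rw [hf]; compute_degree
  have hg : reflect 2 f = C c * X ^ 2 + C b * X + 1 := by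
    have h : f = C 1 * X ^ 2 + C b * X ^ 1 + C c * X ^ 0 := by simp [hf]
    rw [h, reflect_add, reflect_add, reflect_C_mul_X_pow, reflect_C_mul_X_pow,
      reflect_C_mul_X_pow]
    simp [revAt_le]; ring
  have h1 : (f ^ n).coeff (2 * n - m)
      = ((C c * X ^ 2 + C b * X + 1) ^ n).coeff m := by
    rw [← hg, ← reflect_pow_two f hdf n, coeff_reflect, revAt_le hm]
  have h2 : (f ^ n).comp (C c * X) = C (c ^ n) * (C c * X ^ 2 + C b * X + 1) ^ n := by
    rw [pow_comp]
    have h : f.comp (C c * X) = C c * (C c * X ^ 2 + C b * X + 1) := by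
      rw [hf]; simp only [add_comp, pow_comp, mul_comp, X_comp, C_comp]; ring
    rw [h, mul_pow, ← C_pow]
  have h3 := congrArg (fun q : ℤ[X] => q.coeff m) h2
  simp only [coeff_comp_CmulX, coeff_C_mul] at h3
  rw [h3, h1]


/-- `U p b c k = C(p-2, k)_{b,c} + c^(p-1-k) · C(p-2, p-1-k)_{b,c}`. -/
noncomputable def U (p : ℕ) (b c : ℤ) (k : ℕ) : ℤ :=
  gtc b c (p - 2) (k : ℤ) + c ^ (p - 1 - k) * gtc b c (p - 2) ((p : ℤ) - 1 - (k : ℤ))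

open Polynomial Finset

theorem stmt14 (p : ℕ) [Fact p.Prime] (hp2 : p ≠ 2) (b c : ℤ)
    (hbc : ¬ (p : ℤ) ∣ c * (b ^ 2 - 4 * c))
    (hU : ∃ k : ℕ, 2 ≤ k ∧ k ≤ p - 2 ∧ (p : ℤ) ∣ U p b c k) :
    legendreSym p (Dp p b c) = 0 := by
  obtain ⟨k, hk2, hkp, hdvd⟩ := hU
  have hp : p.Prime := Fact.out
  have hp3 : 3 ≤ p := by have h2 := hp.two_le; omega
  have hc : (c : ZMod p) ≠ 0 := by
    rw [Ne, ZMod.intCast_zmod_eq_zero_iff_dvd]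
    exact fun h => hbc (h.mul_right _)
  rw [legendreSym.eq_zero_iff]
  show (Int.castRingHom (ZMod p)) (Dp p b c) = 0
  rw [Dp, RingHom.map_det, RingHom.mapMatrix_apply]
  set n := p - 2 with hn
  set P : ℤ[X] := (X ^ 2 + C b * X + C c) ^ n with hP
  set Q : (ZMod p)[X] := (X ^ 2 + C (b : ZMod p) * X + C (c : ZMod p)) ^ n with hQ
  have hmap : ∀ m : ℕ, ((P.coeff m : ℤ) : ZMod p) = Q.coeff m := by
    intro m
    have hh : P.map (Int.castRingHom (ZMod p)) = Q := by
      simp [hP, hQ, Polynomial.map_pow, Polynomial.map_add, Polynomial.map_mul, map_C, map_X]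
    rw [← hh, coeff_map]; rfl
  have hdQ : Q.natDegree ≤ 2 * n := by
    refine le_trans natDegree_pow_le ?_
    have hh : (X ^ 2 + C (b : ZMod p) * X + C (c : ZMod p)).natDegree ≤ 2 := by compute_degree
    nlinarith
  have hred : ∀ (y : ZMod p), y ≠ 0 → ∀ e : ℕ, y ^ e = y ^ (e % (p - 1)) := by
    intro y hy e
    conv_lhs => rw [← Nat.mod_add_div e (p - 1)]
    rw [pow_add, pow_mul, ZMod.pow_card_sub_one_eq_one hy, one_pow, mul_one]
  -- key entry identity
  have key : ∀ x y : ZMod p, x ≠ 0 → y ≠ 0 →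
      (x ^ 2 + (b : ZMod p) * x * y + (c : ZMod p) * y ^ 2) ^ n
        = ∑ m ∈ range (p - 1),
            (Q.coeff m + Q.coeff (m + (p - 1))) * x ^ m * y ^ ((2 * n - m) % (p - 1)) := by
    intro x y hx hy
    have h1 : (x ^ 2 + (b : ZMod p) * x * y + (c : ZMod p) * y ^ 2) ^ n
        = ∑ m ∈ range (2 * n + 1), Q.coeff m * x ^ m * y ^ (2 * n - m) := by
      have h0 : (x ^ 2 + (b : ZMod p) * x * y + (c : ZMod p) * y ^ 2) ^ n
          = y ^ (2 * n) * Q.eval (x * y⁻¹) := by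
        have he : Q.eval (x * y⁻¹)
            = ((x * y⁻¹) ^ 2 + (b : ZMod p) * (x * y⁻¹) + (c : ZMod p)) ^ n := by
          simp [hQ]
        rw [he, pow_mul, ← mul_pow]
        congr 1
        field_simp
      rw [h0, eval_eq_sum_range' (lt_of_le_of_lt hdQ (Nat.lt_succ_self _)), Finset.mul_sum]
      refine Finset.sum_congr rfl fun m hm => ?_
      have hm' : m ≤ 2 * n := by have := Finset.mem_range.mp hm; omega
      have hy2 : y ^ (2 * n - m) * y ^ m = y ^ (2 * n) := by
        rw [← pow_add]; congr 1; omega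
      have hxy : (x * y⁻¹) ^ m = x ^ m * (y ^ m)⁻¹ := by rw [mul_pow, inv_pow]
      rw [hxy, ← hy2]
      have : y ^ (2 * n - m) * y ^ m * (Q.coeff m * (x ^ m * (y ^ m)⁻¹))
          = Q.coeff m * x ^ m * y ^ (2 * n - m) * (y ^ m * (y ^ m)⁻¹) := by ring
      rw [this, mul_inv_cancel₀ (pow_ne_zero m hy), mul_one]
    have hsplit : 2 * n + 1 = (p - 1) + (p - 2) := by omega
    rw [h1, hsplit, Finset.sum_range_add]
    have hA : ∑ m ∈ range (p - 1), Q.coeff m * x ^ m * y ^ (2 * n - m)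
        = ∑ m ∈ range (p - 1), Q.coeff m * x ^ m * y ^ ((2 * n - m) % (p - 1)) := by
      refine Finset.sum_congr rfl fun m hm => ?_
      rw [← hred y hy]
    have hB : ∑ m ∈ range (p - 2),
          Q.coeff ((p - 1) + m) * x ^ ((p - 1) + m) * y ^ (2 * n - ((p - 1) + m))
        = ∑ m ∈ range (p - 1), Q.coeff (m + (p - 1)) * x ^ m * y ^ ((2 * n - m) % (p - 1)) := by
      rw [show p - 1 = (p - 2) + 1 from by omega]
      rw [Finset.sum_range_succ]
      have hzero : Q.coeff ((p - 2) + ((p - 2) + 1)) = 0 := by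
        apply coeff_eq_zero_of_natDegree_lt
        omega
      rw [hzero, zero_mul, zero_mul, add_zero]
      refine Finset.sum_congr rfl fun m hm => ?_
      have hmlt : m < p - 2 := Finset.mem_range.mp hm
      have e1 : m + ((p - 2) + 1) = ((p - 2) + 1) + m := by omega
      have e2 : (2 * n - m) % ((p - 2) + 1) = 2 * n - (((p - 2) + 1) + m) := by
        have e3 : 2 * n - m = ((p - 2) + 1) + (2 * n - (((p - 2) + 1) + m)) := by omega
        rw [e3, Nat.add_mod_left, Nat.mod_eq_of_lt (by omega)]
      have e4 : x ^ (((p - 2) + 1) + m) = x ^ m := by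
        rw [pow_add, show (p - 2) + 1 = p - 1 from by omega,
          ZMod.pow_card_sub_one_eq_one hx, one_mul]
      rw [e1, e2, e4]
    rw [hA, hB, ← Finset.sum_add_distrib]
    refine Finset.sum_congr rfl fun m hm => ?_
    ring
  -- matrix factorization
  set a : Fin (p - 1) → ZMod p := fun i => (((i : ℕ) + 1 : ℕ) : ZMod p) with haa
  have ha : ∀ i, a i ≠ 0 := by
    intro i hi
    rw [haa] at hi
    simp only [ZMod.natCast_eq_zero_iff] at hi
    have h1 := Nat.le_of_dvd (Nat.succ_pos _) hi
    have h2 := i.isLt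
    omega
  set V : Matrix (Fin (p - 1)) (Fin (p - 1)) (ZMod p) :=
    Matrix.of (fun i m => a i ^ (m : ℕ)) with hV
  set d : Fin (p - 1) → ZMod p :=
    fun m => Q.coeff (m : ℕ) + Q.coeff ((m : ℕ) + (p - 1)) with hd
  set W : Matrix (Fin (p - 1)) (Fin (p - 1)) (ZMod p) :=
    Matrix.of (fun m j => a j ^ ((2 * n - (m : ℕ)) % (p - 1))) with hW
  have hfact : (Matrix.of fun i j : Fin (p - 1) =>
        (((i : ℕ) + 1 : ℤ) ^ 2 + b * ((i : ℕ) + 1) * ((j : ℕ) + 1)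
          + c * ((j : ℕ) + 1) ^ 2) ^ n).map (Int.castRingHom (ZMod p))
      = V * Matrix.diagonal d * W := by
    ext i j
    rw [Matrix.map_apply, Matrix.mul_apply]
    simp only [Matrix.mul_diagonal, hV, hW, Matrix.of_apply, Int.coe_castRingHom]
    trans ((a i ^ 2 + (b : ZMod p) * a i * a j + (c : ZMod p) * a j ^ 2) ^ n)
    · rw [haa]; push_cast; ring
    rw [key (a i) (a j) (ha i) (ha j)]
    rw [← Fin.sum_univ_eq_sum_range (fun m =>
      (Q.coeff m + Q.coeff (m + (p - 1))) * a i ^ m * a j ^ ((2 * n - m) % (p - 1))) (p - 1)]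
    refine Finset.sum_congr rfl fun m _ => ?_
    rw [hd]
    ring
  rw [hfact, Matrix.det_mul, Matrix.det_mul, Matrix.det_diagonal]
  -- the vanishing diagonal entry
  have hz : d ⟨k - 1, by omega⟩ = 0 := by
    have hU0 : ((U p b c k : ℤ) : ZMod p) = 0 := by
      rw [ZMod.intCast_zmod_eq_zero_iff_dvd]; exact hdvd
    rw [U, ← hn] at hU0
    have hg1 : gtc b c n (k : ℤ) = P.coeff (n + k) := by
      rw [gtc, if_pos (by positivity), ← Nat.cast_add, Int.toNat_natCast, ← hP]
    have hg2 : gtc b c n ((p : ℤ) - 1 - (k : ℤ)) = P.coeff (n + (p - 1 - k)) := by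
      have e : (n : ℤ) + ((p : ℤ) - 1 - (k : ℤ)) = ((n + (p - 1 - k) : ℕ) : ℤ) := by omega
      rw [gtc, if_pos (by omega), e, Int.toNat_natCast, ← hP]
    rw [hg1, hg2] at hU0
    push_cast at hU0
    rw [hmap, hmap] at hU0
    have hrevZ := rev_coeff b c n (k - 1) (by omega)
    rw [show 2 * n - (k - 1) = n + (p - 1 - k) from by omega, ← hP] at hrevZ
    have hrev := congrArg (fun z : ℤ => (z : ZMod p)) hrevZ
    push_cast at hrev
    rw [hmap, hmap] at hrev
    have hpow : (c : ZMod p) ^ (k - 1) * (c : ZMod p) ^ (p - 1 - k) = (c : ZMod p) ^ n := by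
      rw [← pow_add]; congr 1; omega
    rw [hd]
    show Q.coeff (k - 1) + Q.coeff ((k - 1) + (p - 1)) = 0
    rw [show (k - 1) + (p - 1) = n + k from by omega]
    have hc1 : (c : ZMod p) ^ (k - 1) ≠ 0 := pow_ne_zero _ hc
    have hsuf : (Q.coeff (k - 1) + Q.coeff (n + k)) * (c : ZMod p) ^ (k - 1) = 0 := by
      linear_combination hrev + (c : ZMod p) ^ (k - 1) * hU0
        - Q.coeff (n + (p - 1 - k)) * hpow
    exact (mul_eq_zero.mp hsuf).resolve_right hc1
  rw [Finset.prod_eq_zero (Finset.mem_univ (⟨k - 1, by omega⟩ : Fin (p - 1))) hz]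
  ring
end

section
/- Let p be an odd prime and let k be an integer with 2 ≤ k ≤ p-2. With U(k) = C(p-2, k)_{2,2} + 2^(p-1-k)·C(p-2, p-1-k)_{2,2} and u_n = u_n(-2,2), one has 2^k · 4 · U(k) ≡ 2^k·((k+1)·u_{p-k+1} - 2(k-1)·u_{p-k-1}) + (2k+4)·u_k - k·u_{k+2} (mod p). -/
private def wseq (j : ℕ) : ℤ :=
  (2 * (j : ℤ) + 6) * luc (-2) 2 (j + 1) - ((j : ℤ) + 1) * luc (-2) 2 (j + 3)

private lemma luc_add_two (n : ℕ) :
    luc (-2) 2 (n + 2) = -2 * luc (-2) 2 (n + 1) - 2 * luc (-2) 2 n := rfl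

private lemma wrec (m : ℕ) :
    wseq (m+4) + 4 * wseq (m+3) + 8 * wseq (m+2) + 8 * wseq (m+1) + 4 * wseq m = 0 := by
  simp only [wseq, luc_add_two]
  push_cast
  ring

private lemma wvals : wseq 0 = 4 ∧ wseq 1 = -16 ∧ wseq 2 = 32 ∧ wseq 3 = -32 := by
  refine ⟨?_, ?_, ?_, ?_⟩ <;> simp [wseq, luc]

open Polynomial

private lemma frob (p : ℕ) [Fact p.Prime] (hp5 : 5 ≤ p) :
    ((X^2 + C 2 * X + C 2 : (ZMod p)[X]))^(p-2) * (X^2 + C 2 * X + C 2)^2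
      = X^(2*p) + C 2 * X^p + C 2 := by
  rw [← pow_add, show p - 2 + 2 = p from by omega]
  rw [add_pow_char, add_pow_char, mul_pow, ← pow_mul, ← C_pow, ZMod.pow_card]

private lemma coeffprod (p : ℕ) [Fact p.Prime] (hp5 : 5 ≤ p) (m : ℕ) :
    (X^(2*p) + C 2 * X^p + C 2 : (ZMod p)[X]).coeff (m+4)
      = (((X^2 + C 2 * X + C 2 : (ZMod p)[X]))^(p-2)).coeff m
        + 4 * (((X^2 + C 2 * X + C 2 : (ZMod p)[X]))^(p-2)).coeff (m+1)
        + 8 * (((X^2 + C 2 * X + C 2 : (ZMod p)[X]))^(p-2)).coeff (m+2)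
        + 8 * (((X^2 + C 2 * X + C 2 : (ZMod p)[X]))^(p-2)).coeff (m+3)
        + 4 * (((X^2 + C 2 * X + C 2 : (ZMod p)[X]))^(p-2)).coeff (m+4) := by
  set q : (ZMod p)[X] := ((X^2 + C 2 * X + C 2 : (ZMod p)[X]))^(p-2) with hq
  rw [← frob p hp5]
  have hexp : q * (X^2 + C 2 * X + C 2 : (ZMod p)[X])^2
      = q*X^4 + C 4*(q*X^3) + C 8*(q*X^2) + C 8*(q*X^1) + C 4*q := by
    have h2 : (C 2 : (ZMod p)[X]) = 2 := map_ofNat C 2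
    have h4 : (C 4 : (ZMod p)[X]) = 4 := map_ofNat C 4
    have h8 : (C 8 : (ZMod p)[X]) = 8 := map_ofNat C 8
    rw [h2, h4, h8]; ring
  have e4 : (q*X^4).coeff (m+4) = q.coeff m := coeff_mul_X_pow q 4 m
  have e3 : (q*X^3).coeff (m+4) = q.coeff (m+1) := by
    have h := coeff_mul_X_pow q 3 (m+1); rwa [show m+1+3 = m+4 from by omega] at h
  have e2 : (q*X^2).coeff (m+4) = q.coeff (m+2) := by
    have h := coeff_mul_X_pow q 2 (m+2); rwa [show m+2+2 = m+4 from by omega] at h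
  have e1 : (q*X^1).coeff (m+4) = q.coeff (m+3) := by
    have h := coeff_mul_X_pow q 1 (m+3); rwa [show m+3+1 = m+4 from by omega] at h
  rw [hexp]
  simp only [coeff_add, coeff_C_mul, e4, e3, e2, e1]

private lemma wv0 : wseq 0 = 4 := wvals.1
private lemma wv1 : wseq 1 = -16 := wvals.2.1
private lemma wv2 : wseq 2 = 32 := wvals.2.2.1
private lemma wv3 : wseq 3 = -32 := wvals.2.2.2

private lemma key (p : ℕ) [Fact p.Prime] (hp5 : 5 ≤ p) :
    ∀ i, i ≤ p - 2 →
    (4 : ZMod p) * (((X^2 + C 2 * X + C 2 : (ZMod p)[X]))^(p-2)).coeff (2*(p-2) - i)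
      = ((wseq i : ℤ) : ZMod p) := by
  intro i
  induction i using Nat.strong_induction_on with
  | _ i IH =>
  intro hi
  set q : (ZMod p)[X] := ((X^2 + C 2 * X + C 2 : (ZMod p)[X]))^(p-2) with hqdef
  have hmon : (X^2 + C 2 * X + C 2 : (ZMod p)[X]).Monic := by monicity!
  have hnd : (X^2 + C 2 * X + C 2 : (ZMod p)[X]).natDegree = 2 := by compute_degree!
  have hdeg : q.natDegree = 2*(p-2) := by
    rw [hqdef, hmon.natDegree_pow, hnd]; ring
  have hz : ∀ t, 2*(p-2) < t → q.coeff t = 0 := fun t ht =>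
    coeff_eq_zero_of_natDegree_lt (by rw [hdeg]; exact ht)
  have E := coeffprod p hp5 (2*p-4-i)
  have hL : (X^(2*p) + C 2 * X^p + C 2 : (ZMod p)[X]).coeff (2*p-4-i+4)
      = (if i = 0 then (1 : ZMod p) else 0) := by
    have c1 : (2*p-4-i+4 = 2*p) ↔ i = 0 := by omega
    have c2 : ¬ (2*p-4-i+4 = p) := by omega
    have c3 : ¬ (2*p-4-i+4 = 0) := by omega
    simp only [coeff_add, coeff_X_pow, coeff_C_mul, coeff_C, c1, if_neg c2, if_neg c3,
      mul_zero, add_zero]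
  rw [hL] at E
  rcases Nat.lt_or_ge i 4 with h4 | h4
  · interval_cases i
    · -- i = 0
      rw [if_pos rfl] at E
      rw [show 2*p-4-0+4 = 2*p from by omega, show 2*p-4-0+3 = 2*p-1 from by omega,
          show 2*p-4-0+2 = 2*p-2 from by omega, show 2*p-4-0+1 = 2*p-3 from by omega,
          show 2*p-4-0 = 2*(p-2) - 0 from by omega,
          hz (2*p-3) (by omega), hz (2*p-2) (by omega), hz (2*p-1) (by omega),
          hz (2*p) (by omega)] at E
      rw [wv0]; push_cast
      linear_combination (-4 : ZMod p) * E
    · -- i = 1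
      rw [if_neg (by omega)] at E
      rw [show 2*p-4-1+4 = 2*p-1 from by omega, show 2*p-4-1+3 = 2*p-2 from by omega,
          show 2*p-4-1+2 = 2*p-3 from by omega, show 2*p-4-1+1 = 2*(p-2) - 0 from by omega,
          show 2*p-4-1 = 2*(p-2) - 1 from by omega,
          hz (2*p-3) (by omega), hz (2*p-2) (by omega), hz (2*p-1) (by omega)] at E
      have h0 := IH 0 (by omega) (by omega)
      rw [wv0] at h0; rw [wv1]; push_cast at h0 ⊢
      linear_combination (-4 : ZMod p) * E - 4 * h0
    · -- i = 2
      rw [if_neg (by omega)] at E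
      rw [show 2*p-4-2+4 = 2*p-2 from by omega, show 2*p-4-2+3 = 2*p-3 from by omega,
          show 2*p-4-2+2 = 2*(p-2) - 0 from by omega,
          show 2*p-4-2+1 = 2*(p-2) - 1 from by omega,
          show 2*p-4-2 = 2*(p-2) - 2 from by omega,
          hz (2*p-3) (by omega), hz (2*p-2) (by omega)] at E
      have h0 := IH 0 (by omega) (by omega)
      have h1 := IH 1 (by omega) (by omega)
      rw [wv0] at h0; rw [wv1] at h1; rw [wv2]; push_cast at h0 h1 ⊢
      linear_combination (-4 : ZMod p) * E - 4 * h1 - 8 * h0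
    · -- i = 3
      rw [if_neg (by omega)] at E
      rw [show 2*p-4-3+4 = 2*p-3 from by omega,
          show 2*p-4-3+3 = 2*(p-2) - 0 from by omega,
          show 2*p-4-3+2 = 2*(p-2) - 1 from by omega,
          show 2*p-4-3+1 = 2*(p-2) - 2 from by omega,
          show 2*p-4-3 = 2*(p-2) - 3 from by omega,
          hz (2*p-3) (by omega)] at E
      have h0 := IH 0 (by omega) (by omega)
      have h1 := IH 1 (by omega) (by omega)
      have h2 := IH 2 (by omega) (by omega)
      rw [wv0] at h0; rw [wv1] at h1; rw [wv2] at h2; rw [wv3]; push_cast at h0 h1 h2 ⊢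
      linear_combination (-4 : ZMod p) * E - 4 * h2 - 8 * h1 - 8 * h0
  · obtain ⟨m, rfl⟩ : ∃ m, i = m + 4 := ⟨i - 4, by omega⟩
    rw [if_neg (by omega)] at E
    rw [show 2*p-4-(m+4)+4 = 2*(p-2) - m from by omega,
        show 2*p-4-(m+4)+3 = 2*(p-2) - (m+1) from by omega,
        show 2*p-4-(m+4)+2 = 2*(p-2) - (m+2) from by omega,
        show 2*p-4-(m+4)+1 = 2*(p-2) - (m+3) from by omega,
        show 2*p-4-(m+4) = 2*(p-2) - (m+4) from by omega] at E
    have h0 := IH m (by omega) (by omega)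
    have h1 := IH (m+1) (by omega) (by omega)
    have h2 := IH (m+2) (by omega) (by omega)
    have h3 := IH (m+3) (by omega) (by omega)
    have hwrc := congrArg (fun z : ℤ => (z : ZMod p)) (wrec m)
    push_cast at hwrc
    linear_combination (-4 : ZMod p) * E - 4 * h3 - 8 * h2 - 8 * h1 - 4 * h0 - hwrc

theorem stmt17 (p : ℕ) (hp : p.Prime) (hp2 : p ≠ 2) (k : ℕ) (hk1 : 2 ≤ k) (hk2 : k ≤ p - 2) :
    2 ^ k * 4 * U p 2 2 k ≡
      2 ^ k * (((k : ℤ) + 1) * luc (-2) 2 (p - k + 1)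
          - 2 * ((k : ℤ) - 1) * luc (-2) 2 (p - k - 1)) +
        (2 * (k : ℤ) + 4) * luc (-2) 2 k - (k : ℤ) * luc (-2) 2 (k + 2) [ZMOD (p : ℤ)] := by
  haveI : Fact p.Prime := ⟨hp⟩
  have hp4 : 4 ≤ p := by omega
  have hpne4 : p ≠ 4 := by rintro rfl; norm_num at hp
  have hp5 : 5 ≤ p := by omega
  rw [← ZMod.intCast_eq_intCast_iff]
  have hg1 : gtc 2 2 (p-2) (k:ℤ) = ((X^2 + C (2:ℤ) * X + C 2)^(p-2)).coeff (p-2+k) := by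
    unfold gtc
    rw [if_pos (by omega)]
    congr 1 <;> omega
  have hg2 : gtc 2 2 (p-2) ((p:ℤ)-1-(k:ℤ))
      = ((X^2 + C (2:ℤ) * X + C 2)^(p-2)).coeff (2*p-3-k) := by
    unfold gtc
    rw [if_pos (by omega)]
    congr 1 <;> omega
  have hmap : ((X^2 + C (2:ℤ) * X + C 2 : ℤ[X])^(p-2)).map (Int.castRingHom (ZMod p))
      = (X^2 + C 2 * X + C 2 : (ZMod p)[X])^(p-2) := by
    simp [Polynomial.map_pow, Polynomial.map_add, Polynomial.map_mul, Polynomial.map_X, map_C,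
      map_ofNat]
  have hco : ∀ m : ℕ, ((((X^2 + C (2:ℤ) * X + C 2 : ℤ[X])^(p-2)).coeff m : ℤ) : ZMod p)
      = (((X^2 + C 2 * X + C 2 : (ZMod p)[X]))^(p-2)).coeff m := by
    intro m
    rw [← hmap, Polynomial.coeff_map]
    rfl
  have h2ne : (2 : ZMod p) ≠ 0 := by
    intro h
    have h' : ((2:ℕ) : ZMod p) = 0 := by exact_mod_cast h
    rw [ZMod.natCast_eq_zero_iff] at h'
    have := Nat.le_of_dvd (by norm_num) h'
    omega
  have hfer : (2 : ZMod p) ^ (p-1) = 1 := ZMod.pow_card_sub_one_eq_one h2ne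
  have hpw : (2:ZMod p)^(p-1-k) * (2:ZMod p)^k = 1 := by
    rw [← pow_add, show (p-1-k) + k = p-1 from by omega, hfer]
  have hp0 : ((p:ℕ) : ZMod p) = 0 := ZMod.natCast_self p
  have k1 := key p hp5 (p-2-k) (by omega)
  have k2 := key p hp5 (k-1) (by omega)
  rw [show 2*(p-2) - (p-2-k) = p-2+k from by omega] at k1
  rw [show 2*(p-2) - (k-1) = 2*p-3-k from by omega] at k2
  simp only [wseq] at k1 k2
  rw [show p-2-k+1 = p-k-1 from by omega, show p-2-k+3 = p-k+1 from by omega,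
      show ((p-2-k : ℕ) : ℤ) = (p:ℤ) - 2 - (k:ℤ) from by omega] at k1
  rw [show k-1+1 = k from by omega, show k-1+3 = k+2 from by omega,
      show ((k-1 : ℕ) : ℤ) = (k:ℤ) - 1 from by omega] at k2
  push_cast at k1 k2 ⊢
  rw [hp0] at k1
  unfold U
  rw [hg1, hg2]
  push_cast
  rw [hco (p-2+k), hco (2*p-3-k)]
  linear_combination (2:ZMod p)^k * k1 + (2:ZMod p)^(p-1-k) * (2:ZMod p)^k * k2
    + ((2 * (k:ZMod p) + 4) * ((luc (-2) 2 k : ℤ) : ZMod p)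
        - (k:ZMod p) * ((luc (-2) 2 (k+2) : ℤ) : ZMod p)) * hpw
end

section
/- Let p be a prime with p ≡ 5 (mod 8), and let U((p-1)/2) = C(p-2, (p-1)/2)_{2,2} + 2^(p-1-(p-1)/2)·C(p-2, p-1-(p-1)/2)_{2,2}. Then U((p-1)/2) ≡ 0 (mod p). -/
theorem stmt18 (p : ℕ) (hp : p.Prime) (hp8 : p % 8 = 5) :
    (p : ℤ) ∣ U p 2 2 ((p - 1) / 2) := by
  have hp5 : 5 ≤ p := by omega
  set k := (p - 1) / 2 with hk
  have hodd : p % 2 = 1 := by omega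
  have h2k : 2 * k = p - 1 := by omega
  have hsub : p - 1 - k = k := by omega
  have hcast : (p : ℤ) - 1 - (k : ℤ) = (k : ℤ) := by
    have : (p : ℤ) - 1 = 2 * (k : ℤ) := by push_cast; omega
    omega
  have hU : U p 2 2 k = (1 + 2 ^ k) * gtc 2 2 (p - 2) (k : ℤ) := by
    rw [U, hsub, hcast]; ring
  rw [hU]
  apply Dvd.dvd.mul_right
  -- 2 is a nonresidue mod p, so 2^(p/2) = -1 in ZMod p
  haveI : Fact p.Prime := ⟨hp⟩
  have hp2 : p ≠ 2 := by omega
  have hns : ¬ IsSquare (2 : ZMod p) := by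
    rw [ZMod.exists_sq_eq_two_iff (p := p) hp2]; omega
  have h2ne : (2 : ZMod p) ≠ 0 := by
    intro h
    have hd := (ZMod.natCast_eq_zero_iff 2 p).mp (by exact_mod_cast h)
    have := Nat.le_of_dvd two_pos hd
    omega
  have hpm : (2 : ZMod p) ^ (p / 2) = -1 := by
    rcases ZMod.pow_div_two_eq_neg_one_or_one p h2ne with h | h
    · exact absurd ((ZMod.euler_criterion p h2ne).mpr h) hns
    · exact h
  have hkp : k = p / 2 := by omega
  have : ((1 + 2 ^ k : ℤ) : ZMod p) = 0 := by
    push_cast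
    rw [hkp, hpm]; ring
  exact (ZMod.intCast_zmod_eq_zero_iff_dvd _ p).mp this
end

section
/- Let p be a prime with p ≡ 1 (mod 8). Then for every integer k with 2 ≤ k ≤ p-2, U(k) = C(p-2, k)_{2,2} + 2^(p-1-k)·C(p-2, p-1-k)_{2,2} is not divisible by p. -/
open Polynomial Finset

private lemma chooseP1 (p : ℕ) (hp : p.Prime) :
    ∀ j, j ≤ p - 1 → (((p - 1).choose j : ℕ) : ZMod p) = (-1) ^ j := by
  intro j
  induction j with
  | zero => intro _; simp
  | succ j ih =>
    intro hj
    have h2 := hp.two_le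
    have hj' : j ≤ p - 1 := by omega
    have hpas : (p - 1).choose j + (p - 1).choose (j + 1) = p.choose (j + 1) := by
      conv_rhs => rw [show p = (p - 1) + 1 by omega]
      rw [Nat.choose_succ_succ]
    have hdvd : p ∣ p.choose (j + 1) :=
      hp.dvd_choose_self (Nat.succ_ne_zero j) (by omega)
    have hcast : ((p.choose (j + 1) : ℕ) : ZMod p) = 0 := by
      rw [ZMod.natCast_eq_zero_iff]; exact hdvd
    have hthis := congrArg (Nat.cast : ℕ → ZMod p) hpas
    push_cast at hthis
    rw [hcast, ih hj'] at hthis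
    rw [pow_succ]
    linear_combination hthis

private lemma chooseP2 (p : ℕ) (hp : p.Prime) :
    ∀ r, r ≤ p - 2 → (((p - 2).choose r : ℕ) : ZMod p) = (-1) ^ r * ((r + 1 : ℕ) : ZMod p) := by
  intro r
  induction r with
  | zero => intro _; simp
  | succ r ih =>
    intro hr
    have h2 := hp.two_le
    have hr' : r ≤ p - 2 := by omega
    have hpas : (p - 2).choose r + (p - 2).choose (r + 1) = (p - 1).choose (r + 1) := by
      conv_rhs => rw [show p - 1 = (p - 2) + 1 by omega]
      rw [Nat.choose_succ_succ]
    have hthis := congrArg (Nat.cast : ℕ → ZMod p) hpas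
    push_cast at hthis
    rw [ih hr', chooseP1 p hp (r + 1) (by omega)] at hthis
    push_cast at hthis ⊢
    rw [pow_succ]
    linear_combination hthis

/-- `Bs g d N = ∑_{j=0}^{N} (j+1) g^(N-j) d^j`. -/
private def Bs {R : Type*} [CommRing R] (g d : R) (N : ℕ) : R :=
  ∑ j ∈ Finset.range (N + 1), ((j + 1 : ℕ) : R) * g ^ (N - j) * d ^ j

/-- `Sp g d M = ∑_{j=0}^{M} (M-j+1)(j+1) g^(M-j) d^j`. -/
private def Sp {R : Type*} [CommRing R] (g d : R) (M : ℕ) : R :=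
  ∑ j ∈ Finset.range (M + 1), ((M - j + 1 : ℕ) : R) * ((j + 1 : ℕ) : R) * g ^ (M - j) * d ^ j

private lemma Bs_succ {R : Type*} [CommRing R] (g d : R) (N : ℕ) :
    Bs g d (N + 1) = g * Bs g d N + ((N + 2 : ℕ) : R) * d ^ (N + 1) := by
  rw [Bs, Finset.sum_range_succ, Bs, Finset.mul_sum]
  congr 1
  · refine Finset.sum_congr rfl fun j hj => ?_
    rw [Finset.mem_range] at hj
    rw [show N + 1 - j = (N - j) + 1 by omega, pow_succ]
    ring
  · simp only [Nat.sub_self, pow_zero, mul_one]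

private lemma Sp_succ {R : Type*} [CommRing R] (g d : R) (M : ℕ) :
    Sp g d (M + 1) = g * Sp g d M + Bs g d (M + 1) := by
  have hB : Bs g d (M + 1)
      = (∑ j ∈ Finset.range (M + 1), ((j + 1 : ℕ) : R) * g ^ (M + 1 - j) * d ^ j)
        + ((M + 1 + 1 : ℕ) : R) * g ^ (M + 1 - (M + 1)) * d ^ (M + 1) := by
    rw [Bs, Finset.sum_range_succ]
  rw [Sp, Finset.sum_range_succ, hB, Sp, Finset.mul_sum,
    ← add_assoc, ← Finset.sum_add_distrib]
  congr 1
  · refine Finset.sum_congr rfl fun j hj => ?_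
    rw [Finset.mem_range] at hj
    rw [show M + 1 - j = (M - j) + 1 by omega]
    push_cast
    ring
  · simp

private lemma Bs_closed {R : Type*} [CommRing R] (i : R) (hi : i ^ 2 = -1) (N : ℕ) :
    2 * Bs (1 - i) (1 + i) N
      = -(((N + 1 : ℕ) : R)) * i * (1 + i) ^ (N + 1) + (1 + i) ^ N + i * (1 - i) ^ N := by
  induction N with
  | zero =>
    rw [Bs, Finset.sum_range_succ, Finset.sum_range_zero]
    push_cast
    linear_combination hi
  | succ N ih =>
    rw [Bs_succ]
    push_cast at ih ⊢
    linear_combination (1 - i) * ih + (1 + i) ^ N * ((2 * (N : R) + 4) + (2 * (N : R) + 3) * i) * hi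

private lemma Sp_closed {R : Type*} [CommRing R] (i : R) (hi : i ^ 2 = -1) (M : ℕ) :
    2 * Sp (1 - i) (1 + i) M
      = ((M + 1 : ℕ) : R) * i * ((1 - i) ^ M - (1 + i) ^ M)
        + ((1 + i) * (1 - i) ^ M + (1 - i) * (1 + i) ^ M) := by
  induction M with
  | zero =>
    rw [Sp, Finset.sum_range_succ, Finset.sum_range_zero]
    push_cast
    ring
  | succ M ih =>
    rw [Sp_succ]
    have hB := Bs_closed i hi (M + 1)
    push_cast at ih hB ⊢
    linear_combination (1 - i) * ih + hB + (1 + i) ^ M * (1 - ((M : R) + 2) * i) * hi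

private lemma coeff_cong (p : ℕ) (hp : p.Prime) (hp3 : 3 ≤ p) (i : ZMod p) (hi : i ^ 2 = -1)
    (k : ℕ) (hk1 : 1 ≤ k) (hk2 : k ≤ p - 2) :
    ((((X ^ 2 + C (2 : ℤ) * X + C 2) ^ (p - 2)).coeff ((p - 2) + k) : ℤ) : ZMod p)
      = (-1) ^ ((p - 2) + k) * Sp (1 - i) (1 + i) (p - 2 - k) := by
  classical
  have hmap : ((((X ^ 2 + C (2 : ℤ) * X + C 2) ^ (p - 2)).coeff ((p - 2) + k) : ℤ) : ZMod p)
      = (((X ^ 2 + C (2 : ZMod p) * X + C 2) ^ (p - 2)).coeff ((p - 2) + k)) := by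
    have hmp : ((X ^ 2 + C (2 : ℤ) * X + C 2) ^ (p - 2)).map (Int.castRingHom (ZMod p))
        = (X ^ 2 + C (2 : ZMod p) * X + C 2) ^ (p - 2) := by
      rw [Polynomial.map_pow]
      congr 1
      simp only [Polynomial.map_add, Polynomial.map_mul, Polynomial.map_pow,
        Polynomial.map_X, Polynomial.map_C]
      norm_num
    rw [← hmp, Polynomial.coeff_map]
    rfl
  rw [hmap]
  have hfac : (X + C (1 - i)) * (X + C (1 + i)) = X ^ 2 + C (2 : ZMod p) * X + C 2 := by
    have h1 : (X + C (1 - i)) * (X + C (1 + i))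
        = X ^ 2 + (C (1 - i) + C (1 + i)) * X + C (1 - i) * C (1 + i) := by
      ring
    rw [h1, ← C_add, ← C_mul, show (1 - i) + (1 + i) = (2 : ZMod p) by ring,
      show (1 - i) * (1 + i) = (2 : ZMod p) by linear_combination -hi]
  rw [← hfac, mul_pow, Polynomial.coeff_mul, Finset.Nat.sum_antidiagonal_eq_sum_range_succ_mk]
  simp only [Polynomial.coeff_X_add_C_pow]
  have hsub : Finset.Ico k ((p - 2) + 1) ⊆ Finset.range ((p - 2) + k + 1) := by
    intro x hx
    rw [Finset.mem_Ico] at hx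
    rw [Finset.mem_range]
    omega
  have hzero : ∀ x ∈ Finset.range ((p - 2) + k + 1), x ∉ Finset.Ico k ((p - 2) + 1) →
      (1 - i) ^ ((p - 2) - x) * ((p - 2).choose x : ZMod p)
        * ((1 + i) ^ ((p - 2) - ((p - 2) + k - x)) * ((p - 2).choose ((p - 2) + k - x) : ZMod p))
        = 0 := by
    intro x hx hx'
    rw [Finset.mem_range] at hx
    rw [Finset.mem_Ico] at hx'
    by_cases hc : x < k
    · rw [Nat.choose_eq_zero_of_lt (show p - 2 < (p - 2) + k - x by omega)]
      simp
    · rw [Nat.choose_eq_zero_of_lt (show p - 2 < x by omega)]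
      simp
  rw [← Finset.sum_subset hsub hzero, Finset.sum_Ico_eq_sum_range,
    show (p - 2) + 1 - k = (p - 2 - k) + 1 by omega, Sp, Finset.mul_sum]
  refine Finset.sum_congr rfl fun j hj => ?_
  rw [Finset.mem_range] at hj
  rw [show (p - 2) - (k + j) = (p - 2 - k) - j by omega,
    show (p - 2) + k - (k + j) = (p - 2) - j by omega,
    show (p - 2) - ((p - 2) - j) = j by omega,
    chooseP2 p hp (k + j) (by omega), chooseP2 p hp ((p - 2) - j) (by omega)]
  have hc1 : ((k + j + 1 : ℕ) : ZMod p) = -(((p - 2 - k) - j + 1 : ℕ) : ZMod p) := by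
    have h0 : ((k + j + 1 : ℕ) : ZMod p) + (((p - 2 - k) - j + 1 : ℕ) : ZMod p)
        = ((p : ℕ) : ZMod p) := by
      rw [← Nat.cast_add]; congr 1; omega
    rw [ZMod.natCast_self] at h0
    exact eq_neg_of_add_eq_zero_left h0
  have hc2 : (((p - 2) - j + 1 : ℕ) : ZMod p) = -((j + 1 : ℕ) : ZMod p) := by
    have h0 : (((p - 2) - j + 1 : ℕ) : ZMod p) + ((j + 1 : ℕ) : ZMod p)
        = ((p : ℕ) : ZMod p) := by
      rw [← Nat.cast_add]; congr 1; omega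
    rw [ZMod.natCast_self] at h0
    exact eq_neg_of_add_eq_zero_left h0
  have hsgn : ((-1 : ZMod p)) ^ ((p - 2) + k) = (-1) ^ (k + j) * (-1) ^ ((p - 2) - j) := by
    rw [← pow_add]; congr 1; omega
  rw [hc1, hc2, hsgn]
  ring

theorem stmt19 (p : ℕ) (hp : p.Prime) (hp8 : p % 8 = 1) :
    ∀ k : ℕ, 2 ≤ k → k ≤ p - 2 → ¬ (p : ℤ) ∣ U p 2 2 k := by
  intro k hk2 hkp hdvd
  haveI : Fact p.Prime := ⟨hp⟩
  have hp2 := hp.two_le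
  have hp9 : 9 ≤ p := by omega
  obtain ⟨r, hr⟩ : IsSquare (-1 : ZMod p) := ZMod.exists_sq_eq_neg_one_iff.mpr (by omega)
  have hi : r ^ 2 = -1 := by rw [sq]; exact hr.symm
  have h2ne : (2 : ZMod p) ≠ 0 := by
    intro h
    have h' : ((2 : ℕ) : ZMod p) = 0 := by exact_mod_cast h
    rw [ZMod.natCast_eq_zero_iff] at h'
    have := Nat.le_of_dvd (by norm_num) h'
    omega
  have hδne : (1 + r : ZMod p) ≠ 0 := by
    intro h; exact h2ne (by linear_combination hi + (1 - r) * h)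
  have hγne : (1 - r : ZMod p) ≠ 0 := by
    intro h; exact h2ne (by linear_combination hi + (1 + r) * h)
  have hrne : r ≠ 0 := by
    intro h
    rw [h] at hi
    exact h2ne (by linear_combination 2 * hi)
  -- cast U to ZMod p
  have hU0 : ((U p 2 2 k : ℤ) : ZMod p) = 0 := by
    rw [ZMod.intCast_zmod_eq_zero_iff_dvd]; exact_mod_cast hdvd
  have hg1 : gtc 2 2 (p - 2) (k : ℤ)
      = ((X ^ 2 + C (2 : ℤ) * X + C 2) ^ (p - 2)).coeff ((p - 2) + k) := by
    have harg : (((p - 2 : ℕ) : ℤ) + (k : ℤ)).toNat = (p - 2) + k := by omega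
    rw [gtc, if_pos (by positivity), harg]
  have hg2 : gtc 2 2 (p - 2) ((p : ℤ) - 1 - (k : ℤ))
      = ((X ^ 2 + C (2 : ℤ) * X + C 2) ^ (p - 2)).coeff ((p - 2) + (p - 1 - k)) := by
    have harg : (((p - 2 : ℕ) : ℤ) + ((p : ℤ) - 1 - (k : ℤ))).toNat = (p - 2) + (p - 1 - k) := by
      omega
    rw [gtc, if_pos (by omega), harg]
  rw [U, hg1, hg2] at hU0
  push_cast at hU0
  rw [coeff_cong p hp (by omega) r hi k (by omega) hkp] at hU0
  have hco2 := coeff_cong p hp (by omega) r hi (p - 1 - k) (by omega) (by omega)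
  rw [show p - 2 - (p - 1 - k) = k - 1 by omega] at hco2
  rw [hco2] at hU0
  -- make the two signs equal
  have hne : ((-1 : ZMod p)) ^ ((p - 2) + k) ≠ 0 := pow_ne_zero _ (neg_ne_zero.mpr one_ne_zero)
  have hsgne : ((-1 : ZMod p)) ^ ((p - 2) + (p - 1 - k)) = (-1) ^ ((p - 2) + k) := by
    have hmc : ((-1 : ZMod p)) ^ ((p - 2) + (p - 1 - k)) * (-1) ^ ((p - 2) + k)
        = (-1) ^ ((p - 2) + k) * (-1) ^ ((p - 2) + k) := by
      rw [← pow_add, ← pow_add]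
      have h1 : Even ((p - 2) + (p - 1 - k) + ((p - 2) + k)) := by rw [Nat.even_iff]; omega
      have h2 : Even ((p - 2) + k + ((p - 2) + k)) := by rw [Nat.even_iff]; omega
      rw [h1.neg_one_pow, h2.neg_one_pow]
    exact mul_right_cancel₀ hne hmc
  rw [hsgne] at hU0
  have hd0 : ((-1 : ZMod p)) ^ ((p - 2) + k)
      * (Sp (1 - r) (1 + r) (p - 2 - k) + (2 : ZMod p) ^ (p - 1 - k) * Sp (1 - r) (1 + r) (k - 1))
      = 0 := by linear_combination hU0
  have hS0 : Sp (1 - r) (1 + r) (p - 2 - k)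
      + (2 : ZMod p) ^ (p - 1 - k) * Sp (1 - r) (1 + r) (k - 1) = 0 :=
    (mul_eq_zero.mp hd0).resolve_left hne
  -- closed forms
  have h2S1 := Sp_closed r hi (p - 2 - k)
  have h2S2 := Sp_closed r hi (k - 1)
  have hm1 : ((p - 2 - k + 1 : ℕ) : ZMod p) = -((k + 1 : ℕ) : ZMod p) := by
    have h0 : ((p - 2 - k + 1 : ℕ) : ZMod p) + ((k + 1 : ℕ) : ZMod p) = ((p : ℕ) : ZMod p) := by
      rw [← Nat.cast_add]; congr 1; omega
    rw [ZMod.natCast_self] at h0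
    exact eq_neg_of_add_eq_zero_left h0
  have hm2 : ((k - 1 + 1 : ℕ) : ZMod p) = ((k : ℕ) : ZMod p) := by congr 1; omega
  rw [hm1] at h2S1
  rw [hm2] at h2S2
  -- multiplicative relations
  have hgd : (1 - r : ZMod p) * (1 + r) = 2 := by linear_combination -hi
  have hX1 : (1 - r : ZMod p) ^ (p - 2 - k) * (1 - r) ^ (k + 1) = 1 := by
    rw [← pow_add, show p - 2 - k + (k + 1) = p - 1 by omega,
      ZMod.pow_card_sub_one_eq_one hγne]
  have hY1 : (1 + r : ZMod p) ^ (p - 2 - k) * (1 + r) ^ (k + 1) = 1 := by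
    rw [← pow_add, show p - 2 - k + (k + 1) = p - 1 by omega,
      ZMod.pow_card_sub_one_eq_one hδne]
  have hprod : (1 - r : ZMod p) ^ (k + 1) * (1 + r) ^ (k + 1) = 2 ^ (k + 1) := by
    rw [← mul_pow, hgd]
  have HA : 2 * (2 : ZMod p) ^ k * (1 - r) ^ (p - 2 - k) = (1 + r) ^ k * (1 + r) := by
    calc 2 * (2 : ZMod p) ^ k * (1 - r) ^ (p - 2 - k)
        = 2 ^ (k + 1) * (1 - r) ^ (p - 2 - k) := by rw [pow_succ]; ring
      _ = (1 - r) ^ (k + 1) * (1 + r) ^ (k + 1) * (1 - r) ^ (p - 2 - k) := by rw [hprod]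
      _ = (1 + r) ^ (k + 1) * ((1 - r) ^ (p - 2 - k) * (1 - r) ^ (k + 1)) := by ring
      _ = (1 + r) ^ (k + 1) := by rw [hX1, mul_one]
      _ = (1 + r) ^ k * (1 + r) := pow_succ _ _
  have HB : 2 * (2 : ZMod p) ^ k * (1 + r) ^ (p - 2 - k) = (1 - r) ^ k * (1 - r) := by
    calc 2 * (2 : ZMod p) ^ k * (1 + r) ^ (p - 2 - k)
        = 2 ^ (k + 1) * (1 + r) ^ (p - 2 - k) := by rw [pow_succ]; ring
      _ = (1 - r) ^ (k + 1) * (1 + r) ^ (k + 1) * (1 + r) ^ (p - 2 - k) := by rw [hprod]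
      _ = (1 - r) ^ (k + 1) * ((1 + r) ^ (p - 2 - k) * (1 + r) ^ (k + 1)) := by ring
      _ = (1 - r) ^ (k + 1) := by rw [hY1, mul_one]
      _ = (1 - r) ^ k * (1 - r) := pow_succ _ _
  have HE : (2 : ZMod p) ^ (p - 1 - k) * 2 ^ k = 1 := by
    rw [← pow_add, show p - 1 - k + k = p - 1 by omega, ZMod.pow_card_sub_one_eq_one h2ne]
  have H2x : 2 * (1 - r : ZMod p) ^ (k - 1) = (1 - r) ^ k * (1 + r) := by
    calc 2 * (1 - r : ZMod p) ^ (k - 1)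
        = (1 - r) * (1 + r) * (1 - r) ^ (k - 1) := by rw [hgd]
      _ = (1 + r) * ((1 - r) ^ (k - 1) * (1 - r)) := by ring
      _ = (1 + r) * (1 - r) ^ k := by rw [← pow_succ, show k - 1 + 1 = k by omega]
      _ = (1 - r) ^ k * (1 + r) := mul_comm _ _
  have H2y : 2 * (1 + r : ZMod p) ^ (k - 1) = (1 + r) ^ k * (1 - r) := by
    calc 2 * (1 + r : ZMod p) ^ (k - 1)
        = (1 - r) * (1 + r) * (1 + r) ^ (k - 1) := by rw [hgd]
      _ = (1 - r) * ((1 + r) ^ (k - 1) * (1 + r)) := by ring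
      _ = (1 - r) * (1 + r) ^ k := by rw [← pow_succ, show k - 1 + 1 = k by omega]
      _ = (1 + r) ^ k * (1 - r) := mul_comm _ _
  -- the master identity
  have hkey : (2 : ZMod p) ^ k * 8
        * (Sp (1 - r) (1 + r) (p - 2 - k)
          + (2 : ZMod p) ^ (p - 1 - k) * Sp (1 - r) (1 + r) (k - 1))
      = 2 * (1 + (2 * (k : ZMod p) + 1) * r) * (1 - r) ^ k
        + 2 * (1 - (2 * (k : ZMod p) + 1) * r) * (1 + r) ^ k := by
    push_cast at h2S1 h2S2
    linear_combination (4 * (2 : ZMod p) ^ k) * h2S1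
      + (4 * (2 : ZMod p) ^ k * (2 : ZMod p) ^ (p - 1 - k)) * h2S2
      + (4 * ((k : ZMod p) * r * ((1 - r) ^ (k - 1) - (1 + r) ^ (k - 1))
          + (1 + r) * (1 - r) ^ (k - 1) + (1 - r) * (1 + r) ^ (k - 1))) * HE
      + (2 * ((1 + r) - ((k : ZMod p) + 1) * r)) * HA
      + (2 * ((1 - r) + ((k : ZMod p) + 1) * r)) * HB
      + (2 * ((k : ZMod p) * r + (1 + r))) * H2x
      + (2 * ((1 - r) - (k : ZMod p) * r)) * H2y
      + (2 * (1 - r) ^ k + 2 * (1 + r) ^ k) * hi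
  rw [hS0, mul_zero] at hkey
  have hhalf : (1 + (2 * (k : ZMod p) + 1) * r) * (1 - r) ^ k
      + (1 - (2 * (k : ZMod p) + 1) * r) * (1 + r) ^ k = 0 := by
    have h2' : (2 : ZMod p) * ((1 + (2 * (k : ZMod p) + 1) * r) * (1 - r) ^ k
        + (1 - (2 * (k : ZMod p) + 1) * r) * (1 + r) ^ k) = 0 := by
      linear_combination -hkey
    exact (mul_eq_zero.mp h2').resolve_left h2ne
  -- substitute (1-r) = -r(1+r)
  have hgi : (1 - r : ZMod p) = -r * (1 + r) := by linear_combination hi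
  have hPQ : (1 - r : ZMod p) ^ k = (-r) ^ k * (1 + r) ^ k := by rw [hgi, mul_pow]
  rw [hPQ] at hhalf
  have hQne : (1 + r : ZMod p) ^ k ≠ 0 := pow_ne_zero _ hδne
  have hT : (1 + (2 * (k : ZMod p) + 1) * r) * (-r) ^ k + (1 - (2 * (k : ZMod p) + 1) * r)
      = 0 := by
    have hfactored : ((1 + (2 * (k : ZMod p) + 1) * r) * (-r) ^ k
        + (1 - (2 * (k : ZMod p) + 1) * r)) * (1 + r) ^ k = 0 := by
      linear_combination hhalf
    exact (mul_eq_zero.mp hfactored).resolve_right hQne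
  have h4 : ((-r : ZMod p)) ^ 4 = 1 := by linear_combination (r ^ 2 - 1) * hi
  have hkmod : ((-r : ZMod p)) ^ k = (-r) ^ (k % 4) := by
    conv_lhs => rw [← Nat.div_add_mod k 4]
    rw [pow_add, pow_mul, h4, one_pow, one_mul]
  rw [hkmod] at hT
  have hknz : ((k : ℕ) : ZMod p) ≠ 0 := by
    rw [Ne, ZMod.natCast_eq_zero_iff]
    intro hd
    have := Nat.le_of_dvd (by omega) hd
    omega
  have hk1nz : ((k + 1 : ℕ) : ZMod p) ≠ 0 := by
    rw [Ne, ZMod.natCast_eq_zero_iff]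
    intro hd
    have := Nat.le_of_dvd (by omega) hd
    omega
  have hm4 : k % 4 = 0 ∨ k % 4 = 1 ∨ k % 4 = 2 ∨ k % 4 = 3 := by omega
  rcases hm4 with h | h | h | h <;> rw [h] at hT
  · -- k % 4 = 0 : contradiction 2 = 0
    exact h2ne (by linear_combination hT)
  · -- k % 4 = 1 : 2(k+1)(1-r) = 0
    have hf : (2 * ((k : ZMod p) + 1)) * (1 - r) = 0 := by
      linear_combination hT + (2 * (k : ZMod p) + 1) * hi
    rcases mul_eq_zero.mp hf with h1 | h1
    · rcases mul_eq_zero.mp h1 with h2' | h2'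
      · exact h2ne h2'
      · exact hk1nz (by push_cast; linear_combination h2')
    · exact hγne h1
  · -- k % 4 = 2 : 2(2k+1)r = 0 hence p = 2k+1, contradiction with p % 8 = 1
    have hf : (2 * (2 * (k : ZMod p) + 1)) * r = 0 := by
      linear_combination -hT + (1 + (2 * (k : ZMod p) + 1) * r) * hi
    rcases mul_eq_zero.mp hf with h1 | h1
    · rcases mul_eq_zero.mp h1 with h2' | h2'
      · exact h2ne h2'
      · have hc0 : ((2 * k + 1 : ℕ) : ZMod p) = 0 := by push_cast; linear_combination h2'
        rw [ZMod.natCast_eq_zero_iff] at hc0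
        obtain ⟨t, ht⟩ := hc0
        have hcase : t = 0 ∨ t = 1 ∨ 2 ≤ t := by omega
        rcases hcase with h' | h' | h'
        · rw [h', mul_zero] at ht
          omega
        · rw [h', mul_one] at ht
          omega
        · have h2p : p * 2 ≤ p * t := Nat.mul_le_mul_left p h'
          rw [← ht] at h2p
          omega
    · exact hrne h1
  · -- k % 4 = 3 : 2k(1+r) = 0
    have hf : (2 * (k : ZMod p)) * (1 + r) = 0 := by
      linear_combination -hT - (r + (2 * (k : ZMod p) + 1) * (r * r - 1)) * hi
    rcases mul_eq_zero.mp hf with h1 | h1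
    · rcases mul_eq_zero.mp h1 with h2' | h2'
      · exact h2ne h2'
      · exact hknz h2'
    · exact hδne h1
end
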